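/- arXiv:2312.01048 — 12 statements merged into one kernel-verified Lean document; each statement's English description precedes it below -/
import Mathlib

section
/- Let A = (a_{ij}) ∈ M_n(ℝ₊) be a nonnegative n×n matrix. Then the max numerical range of A is the closed interval W_max(A) = [a, b] ⊆ ℝ₊, where a = min_{1≤i≤n} a_{ii} and b = max_{1≤i,j≤n} a_{ij} = ‖A‖. -/
open Matrix

/-!
Every `x ≥ 0` with `max_i x_i² = 1` lies in `[0,1]^n` and has some coordinate `x_k = 1`, so
`xᵗ ⊗ A ⊗ x` is squeezed between `a_{kk} ≥ min_i a_{ii}` and `max_{i,j} a_{ij}`. Conversely,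
pick `i₀` with `a_{i₀i₀}` minimal and `(p, q)` with `a_{pq}` maximal; raising the `p`th and
`q`th coordinates of `e_{i₀}` from `0` to `1` is a continuous path of admissible vectors along
which the form runs from `a_{i₀i₀}` to `a_{pq}`, and the intermediate value theorem fills in
the interval.
-/

theorem Continuous.ciSup_of_finite {ι X L : Type*} [Finite ι] [Nonempty ι] [TopologicalSpace X]
    [ConditionallyCompleteLattice L] [TopologicalSpace L] [ContinuousSup L] {f : ι → X → L}
    (hf : ∀ i, Continuous (f i)) : Continuous fun x ↦ ⨆ i, f i x := by
  cases nonempty_fintype ι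
  simp only [← Finset.sup'_univ_eq_ciSup]
  exact Continuous.finset_sup'_apply Finset.univ_nonempty fun i _ ↦ hf i

section Finite

variable {ι : Type*} [Finite ι]

theorem le_ciSup₂_of_finite (f : ι → ι → ℝ) (i j : ι) : f i j ≤ ⨆ i, ⨆ j, f i j :=
  le_ciSup_of_le (Finite.bddAbove_range _) i (le_ciSup (Finite.bddAbove_range _) j)

theorem nonneg_ciSup_mul_self_eq_one_iff [Nonempty ι] {x : ι → ℝ} :
    ((∀ i, 0 ≤ x i) ∧ (⨆ i, x i * x i) = 1) ↔ (∀ i, 0 ≤ x i ∧ x i ≤ 1) ∧ ∃ k, x k = 1 := by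
  constructor
  · rintro ⟨hx0, hx1⟩
    obtain ⟨k, hk⟩ := exists_eq_ciSup_of_finite (f := fun i ↦ x i * x i)
    refine ⟨fun i ↦ ⟨hx0 i, (mul_self_le_mul_self_iff (hx0 i) zero_le_one).mpr ?_⟩, k, ?_⟩
    · simpa [hx1] using le_ciSup (Finite.bddAbove_range fun i ↦ x i * x i) i
    · exact (mul_self_inj (hx0 k) zero_le_one).mp (by simp [hk, hx1])
  · rintro ⟨hx, k, hk⟩
    refine ⟨fun i ↦ (hx i).1, le_antisymm ?_ ?_⟩
    · exact ciSup_le fun i ↦ mul_le_one₀ (hx i).2 (hx i).1 (hx i).2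
    · exact le_ciSup_of_le (Finite.bddAbove_range _) k (by simp [hk])

namespace Matrix

/-- The max-algebra quadratic form `xᵗ ⊗ A ⊗ x`. -/
noncomputable def maxQuadForm (A : Matrix ι ι ℝ) (x : ι → ℝ) : ℝ :=
  ⨆ i, ⨆ j, x i * x j * A i j

theorem le_maxQuadForm (A : Matrix ι ι ℝ) (x : ι → ℝ) (i j : ι) :
    x i * x j * A i j ≤ maxQuadForm A x :=
  le_ciSup₂_of_finite (fun i j ↦ x i * x j * A i j) i j

variable [Nonempty ι]

theorem maxQuadForm_le_ciSup {A : Matrix ι ι ℝ} (hA : ∀ i j, 0 ≤ A i j) {x : ι → ℝ}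
    (hx : ∀ i, 0 ≤ x i ∧ x i ≤ 1) : maxQuadForm A x ≤ ⨆ i, ⨆ j, A i j :=
  ciSup_le fun i ↦ ciSup_le fun j ↦
    (mul_le_of_le_one_left (hA i j) (mul_le_one₀ (hx i).2 (hx j).1 (hx j).2)).trans
      (le_ciSup₂_of_finite A i j)

theorem maxQuadForm_single [DecidableEq ι] {A : Matrix ι ι ℝ} {k : ι} (hk : 0 ≤ A k k) :
    maxQuadForm A (Pi.single k 1) = A k k := by
  refine le_antisymm (ciSup_le fun i ↦ ciSup_le fun j ↦ ?_) ?_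
  · by_cases hij : i = k ∧ j = k
    · simp [hij.1, hij.2]
    · rcases not_and_or.mp hij with h | h <;> simp [h, hk]
  · simpa using le_maxQuadForm A (Pi.single k 1) k k

theorem continuous_maxQuadForm (A : Matrix ι ι ℝ) : Continuous (maxQuadForm A) :=
  Continuous.ciSup_of_finite fun i ↦ Continuous.ciSup_of_finite fun j ↦ by fun_prop

theorem Icc_subset_image_maxQuadForm {A : Matrix ι ι ℝ} {i₀ p q : ι} (hi₀ : 0 ≤ A i₀ i₀) :
    Set.Icc (A i₀ i₀) (A p q) ⊆
      maxQuadForm A '' {x | (∀ i, 0 ≤ x i ∧ x i ≤ 1) ∧ ∃ k, x k = 1} := by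
  classical
  let path : ℝ → ι → ℝ := fun t k ↦ if k = i₀ then 1 else if k = p ∨ k = q then t else 0
  have path_mem : ∀ t ∈ Set.Icc (0 : ℝ) 1,
      (∀ i, 0 ≤ path t i ∧ path t i ≤ 1) ∧ ∃ k, path t k = 1 := fun t ht ↦
    ⟨fun i ↦ by simp only [path]; split_ifs <;> simp [ht.1, ht.2], i₀, by simp [path]⟩
  have path_zero : path 0 = Pi.single i₀ 1 := by
    funext k
    by_cases hk : k = i₀ <;> simp [path, hk]
  have le_path_one : A p q ≤ maxQuadForm A (path 1) := by
    simpa [path] using le_maxQuadForm A (path 1) p q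
  have continuous_path : Continuous fun t ↦ maxQuadForm A (path t) :=
    (continuous_maxQuadForm A).comp
      (continuous_pi fun k ↦ by simp only [path]; split_ifs <;> fun_prop)
  intro z hz
  obtain ⟨t, ht, rfl⟩ := intermediate_value_Icc zero_le_one continuous_path.continuousOn
    ⟨(path_zero ▸ maxQuadForm_single hi₀).trans_le hz.1, hz.2.trans le_path_one⟩
  exact ⟨path t, path_mem t ht, rfl⟩

end Matrix

end Finite

/-- For a nonnegative `n × n` matrix `A` (`n ≥ 1`), the max numerical
range `W_max(A) = { max_{i,j} x_i x_j a_{ij} : x ≥ 0, max_i x_i² = 1 }` equals the closed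
interval `[min_i a_{ii}, max_{i,j} a_{ij}]`. -/
theorem stmt_0 {n : ℕ} (hn : 0 < n) (A : Matrix (Fin n) (Fin n) ℝ)
    (hA : ∀ i j, 0 ≤ A i j) :
    {z : ℝ | ∃ x : Fin n → ℝ, (∀ i, 0 ≤ x i) ∧ (⨆ i, x i * x i) = 1 ∧
        z = ⨆ i, ⨆ j, x i * x j * A i j} =
      Set.Icc (⨅ i, A i i) (⨆ i, ⨆ j, A i j) := by
  have : Nonempty (Fin n) := Fin.pos_iff_nonempty.mp hn
  ext z
  constructor
  · rintro ⟨x, hx_nonneg, hx_sup, rfl⟩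
    obtain ⟨hx_box, k, hk⟩ := nonneg_ciSup_mul_self_eq_one_iff.mp ⟨hx_nonneg, hx_sup⟩
    refine ⟨(ciInf_le (Finite.bddBelow_range _) k).trans ?_, maxQuadForm_le_ciSup hA hx_box⟩
    exact (by simp [hk] : A k k = x k * x k * A k k).trans_le (le_maxQuadForm A x k k)
  · intro hz
    obtain ⟨i₀, hi₀⟩ := exists_eq_ciInf_of_finite (f := fun i ↦ A i i)
    obtain ⟨p, hp⟩ := exists_eq_ciSup_of_finite (f := fun i ↦ ⨆ j, A i j)
    obtain ⟨q, hq⟩ := exists_eq_ciSup_of_finite (f := fun j ↦ A p j)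
    rw [← hi₀, ← hp, ← hq] at hz
    obtain ⟨x, hx, rfl⟩ := Icc_subset_image_maxQuadForm (hA i₀ i₀) hz
    obtain ⟨hx_nonneg, hx_sup⟩ := nonneg_ciSup_mul_self_eq_one_iff.mpr hx
    exact ⟨x, hx_nonneg, hx_sup, rfl⟩
end

section
/- Let A = (a_{ij}) ∈ M_n(ℝ₊) and let 1 ≤ k < n be a positive integer. Then W_max^k(A) = [c, d], where c = min{ max_{j=1,…,k} a_{i_j i_j} : 1 ≤ i_1 < i_2 < ⋯ < i_k ≤ n } and d = max_{1≤i,j≤n} a_{ij}. -/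
open Matrix

/-- Max-algebra matrix product: `(A ⊗ B) i j = max_p (A i p * B p j)`. -/
noncomputable def maxMul {n m l : ℕ} (A : Matrix (Fin n) (Fin m) ℝ)
    (B : Matrix (Fin m) (Fin l) ℝ) : Matrix (Fin n) (Fin l) ℝ :=
  Matrix.of fun i j => ⨆ p, A i p * B p j

/-- Max trace: `tr⊗(A) = max_i A i i`. -/
noncomputable def trMax {n : ℕ} (A : Matrix (Fin n) (Fin n) ℝ) : ℝ := ⨆ i, A i i

/-- The set 𝒳_{n×k} of nonnegative `n×k` matrices with `Xᵀ ⊗ X = I_k`. -/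
def Xset (n k : ℕ) : Set (Matrix (Fin n) (Fin k) ℝ) :=
  {X | (∀ i j, 0 ≤ X i j) ∧ maxMul Xᵀ X = 1}

/-- The max `k`-numerical range `W_max^k(A) = { tr⊗(Xᵀ⊗A⊗X) : X ∈ 𝒳_{n×k} }`. -/
noncomputable def Wmax {n : ℕ} (k : ℕ) (A : Matrix (Fin n) (Fin n) ℝ) : Set ℝ :=
  {z | ∃ X ∈ Xset n k, z = trMax (maxMul (maxMul Xᵀ A) X)}

/-!
A matrix `X` lies in `𝒳_{n×k}` exactly when its entries lie in `[0, 1]`, every column attains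
the value `1`, and distinct columns have disjoint supports. Bounding every term
`x_{pj} a_{pq} x_{qj}` by `a_{pq}` gives the upper bound `d`; the `k` rows where the columns
attain `1` are distinct, and the diagonal terms there give the lower bound `c`.

Conversely, for `c ≤ t ≤ d` take a `k`-set `S` of pivot rows with all `a_{yy} ≤ t` and let the
column of one pivot grow continuously onto further rows until the value reaches `d`; by the
intermediate value theorem the value `t` is attained along the way.
-/

theorem Continuous.iSup_fintype {L X ι : Type*} [ConditionallyCompleteLattice L]
    [TopologicalSpace L] [ContinuousSup L] [TopologicalSpace X] [Fintype ι] {f : ι → X → L}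
    (hf : ∀ i, Continuous (f i)) : Continuous fun x => ⨆ i, f i x := by
  cases isEmpty_or_nonempty ι
  · simpa only [iSup_of_empty'] using continuous_const
  · simp_rw [← Finset.sup'_univ_eq_ciSup]
    exact Continuous.finset_sup'_apply _ fun i _ => hf i

section

variable {X : Type*} [TopologicalSpace X] {n m l : ℕ}

theorem Continuous.maxMul {f : X → Matrix (Fin n) (Fin m) ℝ}
    {g : X → Matrix (Fin m) (Fin l) ℝ} (hf : Continuous f) (hg : Continuous g) :
    Continuous fun x => maxMul (f x) (g x) :=
  continuous_matrix fun i j =>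
    Continuous.iSup_fintype fun p => (hf.matrix_elem i p).mul (hg.matrix_elem p j)

theorem Continuous.trMax {f : X → Matrix (Fin n) (Fin n) ℝ} (hf : Continuous f) :
    Continuous fun x => trMax (f x) :=
  Continuous.iSup_fintype fun i => hf.matrix_elem i i

end

section Xset

variable {n k : ℕ} [NeZero n] {X : Matrix (Fin n) (Fin k) ℝ}

theorem mem_Xset_iff : X ∈ Xset n k ↔ (∀ i j, 0 ≤ X i j) ∧ (∀ i j, X i j ≤ 1) ∧
    (∀ j, ∃ i, X i j = 1) ∧ ∀ i {j l}, j ≠ l → X i j * X i l = 0 := by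
  have hsup : ∀ j l, maxMul Xᵀ X j l = ⨆ i, X i j * X i l := fun _ _ => rfl
  constructor
  · rintro ⟨hXnonneg, hX⟩
    have hdiag : ∀ j, ⨆ i, X i j * X i j = 1 := fun j => by
      rw [← hsup, hX, one_apply_eq]
    have hle : ∀ i j, X i j * X i j ≤ 1 := fun i j =>
      hdiag j ▸ Finite.le_ciSup_of_le i le_rfl
    refine ⟨hXnonneg, fun i j => by nlinarith [hXnonneg i j, hle i j], fun j => ?_,
      fun i j l hjl => ?_⟩
    · obtain ⟨i, hi⟩ := Finite.exists_max fun i => X i j * X i j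
      have : X i j * X i j = 1 := le_antisymm (hle i j) (hdiag j ▸ ciSup_le hi)
      exact ⟨i, by nlinarith [hXnonneg i j]⟩
    · have hoff : ⨆ i, X i j * X i l = 0 := by rw [← hsup, hX, one_apply_ne hjl]
      exact le_antisymm (hoff ▸ Finite.le_ciSup_of_le i le_rfl)
        (mul_nonneg (hXnonneg i j) (hXnonneg i l))
  · rintro ⟨hXnonneg, hX1, hpiv, horth⟩
    refine ⟨hXnonneg, Matrix.ext fun j l => ?_⟩
    rw [hsup]
    rcases eq_or_ne j l with rfl | hjl
    · obtain ⟨p, hp⟩ := hpiv j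
      refine le_antisymm (ciSup_le fun i => ?_) ?_
      · rw [one_apply_eq]; nlinarith [hXnonneg i j, hX1 i j]
      · rw [one_apply_eq]
        exact Finite.le_ciSup_of_le p (by rw [hp, mul_one])
    · simp only [horth _ hjl, ciSup_const, one_apply_ne hjl]

end Xset

section Value

variable {n k : ℕ} {A : Matrix (Fin n) (Fin n) ℝ} {X : Matrix (Fin n) (Fin k) ℝ}

theorem trMax_maxMul_transpose_eq (hX : ∀ i j, 0 ≤ X i j) :
    trMax (maxMul (maxMul Xᵀ A) X) = ⨆ j, ⨆ q, ⨆ p, X p j * A p q * X q j := by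
  simp only [trMax, maxMul, of_apply, transpose_apply]
  exact iSup_congr fun j => iSup_congr fun q => Real.iSup_mul_of_nonneg (hX q j) _

theorem le_trMax_maxMul_transpose (hX : ∀ i j, 0 ≤ X i j) (j : Fin k) (p q : Fin n) :
    X p j * A p q * X q j ≤ trMax (maxMul (maxMul Xᵀ A) X) := by
  rw [trMax_maxMul_transpose_eq hX]
  exact Finite.le_ciSup_of_le j <| Finite.le_ciSup_of_le q <| Finite.le_ciSup_of_le p le_rfl

theorem trMax_maxMul_transpose_le [NeZero n] [NeZero k] (hX : ∀ i j, 0 ≤ X i j) {t : ℝ}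
    (h : ∀ j p q, X p j * A p q * X q j ≤ t) : trMax (maxMul (maxMul Xᵀ A) X) ≤ t := by
  rw [trMax_maxMul_transpose_eq hX]
  exact ciSup_le fun j => ciSup_le fun q => ciSup_le fun p => h j p q

theorem trMax_le_iSup_of_mem_Xset [NeZero n] [NeZero k] (hA : ∀ i j, 0 ≤ A i j)
    (hX : X ∈ Xset n k) : trMax (maxMul (maxMul Xᵀ A) X) ≤ ⨆ i, ⨆ j, A i j := by
  obtain ⟨hXnonneg, hX1, -, -⟩ := mem_Xset_iff.1 hX
  refine trMax_maxMul_transpose_le hXnonneg fun j p q => ?_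
  calc X p j * A p q * X q j ≤ 1 * A p q * 1 := by gcongr <;> simp [hA, hXnonneg, hX1]
    _ ≤ ⨆ i, ⨆ j, A i j := by
      rw [one_mul, mul_one]
      exact Finite.le_ciSup_of_le p <| Finite.le_ciSup_of_le q le_rfl

theorem iInf_le_trMax_of_mem_Xset [NeZero n] [NeZero k] (hX : X ∈ Xset n k) :
    (⨅ S : {S : Finset (Fin n) // S.card = k}, ⨆ j : {x : Fin n // x ∈ S.1}, A j.1 j.1)
      ≤ trMax (maxMul (maxMul Xᵀ A) X) := by
  obtain ⟨hXnonneg, -, hpiv, horth⟩ := mem_Xset_iff.1 hX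
  choose p hp using hpiv
  have hinj : Function.Injective p := fun j l hjl => by
    by_contra hne
    have h := horth (p j) hne
    rw [hp j, hjl, hp l] at h
    norm_num at h
  refine (ciInf_le (Finite.bddBelow_range _) ⟨Finset.univ.image p, by
    rw [Finset.card_image_of_injective _ hinj, Finset.card_univ, Fintype.card_fin]⟩).trans ?_
  have : Nonempty {x // x ∈ Finset.univ.image p} :=
    ⟨⟨p 0, Finset.mem_image_of_mem p (Finset.mem_univ 0)⟩⟩
  refine ciSup_le fun ⟨x, hx⟩ => ?_
  obtain ⟨j, -, rfl⟩ := Finset.mem_image.1 hx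
  simpa [hp j] using le_trMax_maxMul_transpose (A := A) hXnonneg j (p j) (p j)

end Value

section PivotPath

variable {n k : ℕ} (σ : Fin k → Fin n) (x : Fin n) (T : Finset (Fin n))

noncomputable def pivotPath (s : ℝ) : Matrix (Fin n) (Fin k) ℝ :=
  of fun i j => if i = σ j then 1 else if σ j = x ∧ i ∈ T then s else 0

theorem continuous_pivotPath : Continuous (pivotPath σ x T) :=
  continuous_matrix fun i j => by
    simp only [pivotPath, of_apply]
    split_ifs <;> fun_prop

variable {σ x T}

theorem pivotPath_mem_Xset [NeZero n] (hσ : Function.Injective σ) (hT : ∀ j, σ j ∉ T)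
    {s : ℝ} (hs : s ∈ Set.Icc (0 : ℝ) 1) : pivotPath σ x T s ∈ Xset n k := by
  refine mem_Xset_iff.2
    ⟨fun i j => ?_, fun i j => ?_, fun j => ⟨σ j, if_pos rfl⟩, fun i j l hjl => ?_⟩
  · simp only [pivotPath, of_apply]; split_ifs <;> simp [hs.1]
  · simp only [pivotPath, of_apply]; split_ifs <;> simp [hs.2]
  · simp only [pivotPath, of_apply]
    have := hσ.ne hjl
    split_ifs <;> grind

end PivotPath

theorem exists_card_eq_forall_diag_le {n k : ℕ} (hkn : k ≤ n)
    {A : Matrix (Fin n) (Fin n) ℝ} {t : ℝ}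
    (ht : (⨅ S : {S : Finset (Fin n) // S.card = k}, ⨆ j : {x : Fin n // x ∈ S.1}, A j.1 j.1)
      ≤ t) :
    ∃ S : Finset (Fin n), S.card = k ∧ ∀ y ∈ S, A y y ≤ t := by
  have : Nonempty {S : Finset (Fin n) // S.card = k} := by
    obtain ⟨S, -, hS⟩ :=
      Finset.exists_subset_card_eq (show k ≤ (Finset.univ : Finset (Fin n)).card by simpa)
    exact ⟨⟨S, hS⟩⟩
  obtain ⟨⟨S, hS⟩, hmin⟩ := Finite.exists_min
    fun S : {S : Finset (Fin n) // S.card = k} => ⨆ j : {x : Fin n // x ∈ S.1}, A j.1 j.1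
  refine ⟨S, hS, fun y hy => le_trans ?_ ht⟩
  exact Finite.le_ciSup_of_le (⟨y, hy⟩ : {x // x ∈ S}) le_rfl |>.trans (le_ciInf hmin)

section Surjectivity

variable {n k : ℕ} [NeZero n] [NeZero k] {A : Matrix (Fin n) (Fin n) ℝ} {t : ℝ}

theorem mem_Wmax_of_pivots (hA : ∀ i j, 0 ≤ A i j) {S T : Finset (Fin n)} (hS : S.card = k)
    (hST : Disjoint S T) {x : Fin n} (hx : x ∈ S) (hdiag : ∀ y ∈ S, A y y ≤ t) {a b : Fin n}
    (ha : a ∈ insert x T) (hb : b ∈ insert x T) (hab : t ≤ A a b) : t ∈ Wmax k A := by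
  set σ := S.orderEmbOfFin hS
  have hσS : ∀ j, σ j ∈ S := S.orderEmbOfFin_mem hS
  have hT : ∀ j, σ j ∉ T := fun j => Finset.disjoint_left.1 hST (hσS j)
  have hX s (hs : s ∈ Set.Icc (0 : ℝ) 1) := pivotPath_mem_Xset (x := x) σ.injective hT hs
  have hXnonneg s (hs : s ∈ Set.Icc (0 : ℝ) 1) := (mem_Xset_iff.1 (hX s hs)).1
  set φ := fun s => trMax (maxMul (maxMul (pivotPath σ x T s)ᵀ A) (pivotPath σ x T s))
  have hφ : Continuous φ := by
    have := continuous_pivotPath σ x T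
    exact (this.matrix_transpose.maxMul continuous_const).maxMul this |>.trMax
  have hφ0 : φ 0 ≤ t := by
    refine trMax_maxMul_transpose_le (hXnonneg 0 (by simp)) fun j p q => ?_
    have ht : 0 ≤ t := (hA _ _).trans (hdiag _ (hσS j))
    simp only [pivotPath, of_apply, ite_self]
    split_ifs with hp hq
    · simpa [hp, hq] using hdiag _ (hσS j)
    all_goals simpa using ht
  have hφ1 : t ≤ φ 1 := by
    obtain ⟨j, hj⟩ : x ∈ Set.range σ := by rwa [S.range_orderEmbOfFin hS]
    have hone : ∀ i ∈ insert x T, pivotPath σ x T 1 i j = 1 := fun i hi => by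
      simp only [pivotPath, of_apply]; grind
    refine hab.trans ?_
    simpa [hone a ha, hone b hb] using
      le_trMax_maxMul_transpose (A := A) (hXnonneg 1 (by simp)) j a b
  obtain ⟨s, hs, hst⟩ := intermediate_value_Icc zero_le_one hφ.continuousOn ⟨hφ0, hφ1⟩
  exact ⟨_, hX s hs, hst.symm⟩

theorem mem_Wmax_of_forall_diag_le (hA : ∀ i j, 0 ≤ A i j) (hkn : k < n)
    {S : Finset (Fin n)} (hS : S.card = k) (hdiag : ∀ y ∈ S, A y y ≤ t) {a b : Fin n}
    (hab : t ≤ A a b) : t ∈ Wmax k A := by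
  by_cases hswap : a ∈ S ∧ b ∈ S ∧ a ≠ b
  · obtain ⟨ha, hb, hne⟩ := hswap
    obtain ⟨r, -, hr⟩ := Finset.exists_mem_notMem_of_card_lt_card (s := S) (t := Finset.univ)
      (by simpa [hS])
    by_cases hrr : t ≤ A r r
    · exact mem_Wmax_of_pivots hA hS (Finset.disjoint_singleton_right.2 hr) ha hdiag
        (by simp) (by simp) hrr
    -- now `a_rr < t`, so `r` may replace the pivot `b`, which then joins the column of `a`
    refine mem_Wmax_of_pivots (S := insert r (S.erase b)) (T := {b}) (x := a) hA ?_
      (by simp [show b ≠ r by grind]) (by simp [ha, hne]) ?_ (by simp) (by simp) hab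
    · rw [Finset.card_insert_of_notMem (by simp [hr]), Finset.card_erase_of_mem hb, hS]
      have := Finset.card_pos.2 ⟨a, ha⟩
      omega
    · exact (Finset.forall_mem_insert _ _ _).2
        ⟨le_of_not_ge hrr, fun y hy => hdiag y (Finset.mem_of_mem_erase hy)⟩
  · obtain ⟨x, hx, hax, hbx⟩ :
        ∃ x ∈ S, a ∈ insert x ({a, b} \ S) ∧ b ∈ insert x ({a, b} \ S) := by
      obtain ⟨y, hy⟩ := Finset.card_pos.1 (hS ▸ Nat.pos_of_neZero k)
      by_cases ha : a ∈ S
      · exact ⟨a, ha, by simp, by grind⟩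
      by_cases hb : b ∈ S
      · exact ⟨b, hb, by simp [ha], by simp⟩
      · exact ⟨y, hy, by simp [ha], by simp [hb]⟩
    exact mem_Wmax_of_pivots hA hS Finset.disjoint_sdiff hx hdiag hax hbx hab

end Surjectivity

/-- For a nonnegative `n × n` matrix `A` and `1 ≤ k < n`,
`W_max^k(A) = [c, d]` with `c = min over k-element subsets S of max_{j ∈ S} a_{jj}` and
`d = max_{i,j} a_{ij}`. -/
theorem stmt_2 {n k : ℕ} (hk : 1 ≤ k) (hkn : k < n)
    (A : Matrix (Fin n) (Fin n) ℝ) (hA : ∀ i j, 0 ≤ A i j) :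
    Wmax k A = Set.Icc
      (⨅ S : {S : Finset (Fin n) // S.card = k}, ⨆ j : {x : Fin n // x ∈ S.1}, A j.1 j.1)
      (⨆ i, ⨆ j, A i j) := by
  have : NeZero k := ⟨by omega⟩
  have : NeZero n := ⟨by omega⟩
  ext t
  constructor
  · rintro ⟨X, hX, rfl⟩
    exact ⟨iInf_le_trMax_of_mem_Xset hX, trMax_le_iSup_of_mem_Xset hA hX⟩
  · rintro ⟨hct, htd⟩
    obtain ⟨S, hS, hdiag⟩ := exists_card_eq_forall_diag_le hkn.le hct
    obtain ⟨⟨a, b⟩, hmax⟩ := Finite.exists_max fun ab : Fin n × Fin n => A ab.1 ab.2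
    exact mem_Wmax_of_forall_diag_le hA hkn hS hdiag (a := a) (b := b)
      (htd.trans (ciSup_le fun i => ciSup_le fun j => hmax (i, j)))
end

section
/- Let A = (a_{ij}) ∈ M_n(ℝ₊) and let 1 ≤ k < n be a positive integer. Set c = min{ max_{j=1,…,k} a_{i_j i_j} : 1 ≤ i_1 < i_2 < ⋯ < i_k ≤ n } and d = max_{1≤i,j≤n} a_{ij}. Then W_max^k(A) ⊆ [c, d] and both c ∈ W_max^k(A) and d ∈ W_max^k(A). -/
/-!
Every `X ∈ 𝒳_{n×k}` has entries in `[0, 1]`, an entry `1` in each column, and columns with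
disjoint supports, so the rows `P j` with `x_{P j, j} = 1` are pairwise distinct. Since
`tr⊗(Xᵀ⊗A⊗X) = max_{j,p,q} x_{pj} a_{pq} x_{qj}`, entries `≤ 1` give the upper bound `d`,
and the terms `p = q = P j` give the lower bound `c`, because `{P j}` is a `k`-subset.
Both bounds are attained by 0/1 matrices whose columns are indicators of disjoint sets: the
singletons of a minimising `k`-subset for `c`; and for `d = a_{i₀j₀}` the column `{i₀, j₀}`
followed by `k - 1` singletons outside it, which exist because `k < n`.
-/

open Matrix

open Finset Function

variable {n k : ℕ}

lemma trMax_maxMul_eq_iSup (A : Matrix (Fin n) (Fin n) ℝ) {X : Matrix (Fin n) (Fin k) ℝ}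
    (hX : ∀ i j, 0 ≤ X i j) :
    trMax (maxMul (maxMul Xᵀ A) X) = ⨆ j, ⨆ q, ⨆ p, X p j * A p q * X q j := by
  simp only [trMax, maxMul, of_apply, transpose_apply, Real.iSup_mul_of_nonneg (hX _ _)]

lemma le_trMax_maxMul (A : Matrix (Fin n) (Fin n) ℝ) {X : Matrix (Fin n) (Fin k) ℝ}
    {p q : Fin n} {j : Fin k} (hp : X p j = 1) (hq : X q j = 1) :
    A p q ≤ trMax (maxMul (maxMul Xᵀ A) X) := by
  calc A p q ≤ (⨆ p', X p' j * A p' q) * X q j := by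
        rw [hq, mul_one]
        simpa [hp] using le_ciSup (Finite.bddAbove_range fun p' => X p' j * A p' q) p
    _ ≤ ⨆ q', (⨆ p', X p' j * A p' q') * X q' j :=
        le_ciSup (Finite.bddAbove_range fun q' => (⨆ p', X p' j * A p' q') * X q' j) q
    _ ≤ ⨆ j', ⨆ q', (⨆ p', X p' j' * A p' q') * X q' j' :=
        le_ciSup (Finite.bddAbove_range fun j' => ⨆ q', (⨆ p', X p' j' * A p' q') * X q' j') j

lemma trMax_maxMul_le {A : Matrix (Fin n) (Fin n) ℝ} {X : Matrix (Fin n) (Fin k) ℝ}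
    (hX : ∀ i j, 0 ≤ X i j) {b : ℝ} (hb : 0 ≤ b)
    (h : ∀ j p q, X p j * A p q * X q j ≤ b) : trMax (maxMul (maxMul Xᵀ A) X) ≤ b := by
  rw [trMax_maxMul_eq_iSup A hX]
  exact Real.iSup_le
    (fun j => Real.iSup_le (fun q => Real.iSup_le (fun p => h j p q) hb) hb) hb

namespace Xset

variable {X : Matrix (Fin n) (Fin k) ℝ}

lemma iSup_mul_apply (hX : X ∈ Xset n k) (j j' : Fin k) :
    ⨆ p, X p j * X p j' = if j = j' then 1 else 0 := by
  simpa [maxMul, one_apply] using congrFun (congrFun hX.2 j) j'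

lemma apply_le_one (hX : X ∈ Xset n k) (i : Fin n) (j : Fin k) : X i j ≤ 1 := by
  have h : X i j * X i j ≤ 1 := by
    simpa [iSup_mul_apply hX] using le_ciSup (Finite.bddAbove_range fun p => X p j * X p j) i
  nlinarith [hX.1 i j]

lemma exists_apply_eq_one (hX : X ∈ Xset n k) (j : Fin k) : ∃ p, X p j = 1 := by
  have h := iSup_mul_apply hX j j
  rw [if_pos rfl] at h
  have : Nonempty (Fin n) := by
    by_contra hn
    rw [not_nonempty_iff] at hn
    simp [Real.iSup_of_isEmpty] at h
  obtain ⟨p, hp⟩ := exists_eq_ciSup_of_finite (f := fun p => X p j * X p j)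
  exact ⟨p, (mul_self_eq_one_iff.mp (hp.trans h)).resolve_right (by linarith [hX.1 p j])⟩

lemma apply_mul_apply_eq_zero (hX : X ∈ Xset n k) {j j' : Fin k} (hjj' : j ≠ j') (p : Fin n) :
    X p j * X p j' = 0 :=
  le_antisymm
    (by simpa [iSup_mul_apply hX, hjj'] using
      le_ciSup (Finite.bddAbove_range fun p => X p j * X p j') p)
    (mul_nonneg (hX.1 p j) (hX.1 p j'))

end Xset

lemma trMax_maxMul_le_iSup_iSup {A : Matrix (Fin n) (Fin n) ℝ} (hA : ∀ i j, 0 ≤ A i j)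
    {X : Matrix (Fin n) (Fin k) ℝ} (hX : X ∈ Xset n k) :
    trMax (maxMul (maxMul Xᵀ A) X) ≤ ⨆ i, ⨆ j, A i j :=
  trMax_maxMul_le hX.1 (Real.iSup_nonneg fun i => Real.iSup_nonneg (hA i)) fun j p q =>
    calc X p j * A p q * X q j ≤ X p j * A p q :=
          mul_le_of_le_one_right (mul_nonneg (hX.1 p j) (hA p q)) (Xset.apply_le_one hX q j)
      _ ≤ A p q := mul_le_of_le_one_left (hA p q) (Xset.apply_le_one hX p j)
      _ ≤ ⨆ i, ⨆ j, A i j :=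
          le_ciSup_of_le (Finite.bddAbove_range _) p (le_ciSup (Finite.bddAbove_range _) q)

lemma iInf_iSup_diag_le_trMax_maxMul [NeZero k] (A : Matrix (Fin n) (Fin n) ℝ)
    {X : Matrix (Fin n) (Fin k) ℝ} (hX : X ∈ Xset n k) :
    (⨅ S : {S : Finset (Fin n) // S.card = k}, ⨆ j : {x : Fin n // x ∈ S.1}, A j.1 j.1)
      ≤ trMax (maxMul (maxMul Xᵀ A) X) := by
  choose P hP using Xset.exists_apply_eq_one hX
  have hPinj : Injective P := fun j j' h => by
    by_contra hjj'
    have h0 := Xset.apply_mul_apply_eq_zero hX hjj' (P j)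
    rw [hP j, h, hP j'] at h0
    norm_num at h0
  refine (ciInf_le (Finite.bddBelow_range _) ⟨univ.map ⟨P, hPinj⟩, by simp⟩).trans ?_
  have : Nonempty {x // x ∈ univ.map ⟨P, hPinj⟩} := ⟨⟨P 0, by simp⟩⟩
  refine ciSup_le fun ⟨x, hx⟩ => ?_
  obtain ⟨j, -, rfl⟩ := mem_map.mp hx
  exact le_trMax_maxMul A (hP j) (hP j)

def colIndicator (C : Fin k → Finset (Fin n)) : Matrix (Fin n) (Fin k) ℝ :=
  of fun i j => if i ∈ C j then 1 else 0

lemma colIndicator_mem_Xset {C : Fin k → Finset (Fin n)} (hne : ∀ j, (C j).Nonempty)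
    (hdisj : Pairwise (Disjoint on C)) : colIndicator C ∈ Xset n k := by
  refine ⟨fun i j => by simp only [colIndicator, of_apply]; positivity, ?_⟩
  ext j j'
  obtain ⟨p₀, hp₀⟩ := hne j
  have : Nonempty (Fin n) := ⟨p₀⟩
  simp only [maxMul, colIndicator, of_apply, transpose_apply, one_apply, ite_zero_mul_ite_zero,
    mul_one]
  split_ifs with h
  · subst h
    refine le_antisymm (ciSup_le fun p => ?_) (le_ciSup_of_le (Finite.bddAbove_range _) p₀ ?_)
    all_goals split_ifs <;> simp_all
  · have hoff (p : Fin n) : ¬(p ∈ C j ∧ p ∈ C j') := fun hp =>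
      disjoint_left.mp (hdisj h) hp.1 hp.2
    simp only [hoff, if_false, ciSup_const]

lemma pairwise_disjoint_cons_singleton {α : Type*} [DecidableEq α] {m : ℕ} {T : Finset α}
    {σ : Fin m → α} (hσ : Injective σ) (hT : ∀ j, σ j ∉ T) :
    Pairwise (Disjoint on (Fin.cons T fun j => {σ j} : Fin (m + 1) → Finset α)) := by
  intro j j' h
  induction j using Fin.cases <;> induction j' using Fin.cases
  · exact absurd rfl h
  · simpa [onFun] using hT _
  · simpa [onFun] using hT _
  · simpa [onFun, hσ.eq_iff] using h

lemma iInf_iSup_diag_mem_Wmax [NeZero k] (hkn : k ≤ n) {A : Matrix (Fin n) (Fin n) ℝ}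
    (hA : ∀ i j, 0 ≤ A i j) :
    (⨅ S : {S : Finset (Fin n) // S.card = k}, ⨆ j : {x : Fin n // x ∈ S.1}, A j.1 j.1)
      ∈ Wmax k A := by
  have : Nonempty {S : Finset (Fin n) // S.card = k} := by
    obtain ⟨S, -, hS⟩ :=
      exists_subset_card_eq (s := (univ : Finset (Fin n))) (n := k) (by simpa using hkn)
    exact ⟨⟨S, hS⟩⟩
  obtain ⟨⟨S, hS⟩, hSmin⟩ := exists_eq_ciInf_of_finite
    (f := fun S : {S : Finset (Fin n) // S.card = k} => ⨆ j : {x : Fin n // x ∈ S.1}, A j.1 j.1)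
  set σ := S.orderEmbOfFin hS
  have hX := colIndicator_mem_Xset (C := fun j => {σ j}) (fun _ => singleton_nonempty _)
    fun j j' h => disjoint_singleton.mpr (σ.injective.ne h)
  refine ⟨_, hX, le_antisymm (iInf_iSup_diag_le_trMax_maxMul A hX) ?_⟩
  rw [← hSmin]
  refine trMax_maxMul_le hX.1 (Real.iSup_nonneg fun x => hA _ _) fun j p q => ?_
  simp only [colIndicator, of_apply, mem_singleton]
  split_ifs with hp hq
  · subst hp hq
    simpa using le_ciSup (Finite.bddAbove_range fun x : {x // x ∈ S} => A x.1 x.1)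
      ⟨σ j, S.orderEmbOfFin_mem hS j⟩
  all_goals simpa using Real.iSup_nonneg fun x : {x // x ∈ S} => hA x.1 x.1

lemma iSup_iSup_mem_Wmax [NeZero k] (hkn : k < n) {A : Matrix (Fin n) (Fin n) ℝ}
    (hA : ∀ i j, 0 ≤ A i j) : (⨆ i, ⨆ j, A i j) ∈ Wmax k A := by
  obtain ⟨m, rfl⟩ := Nat.exists_eq_succ_of_ne_zero (NeZero.ne k)
  have : Nonempty (Fin n) := ⟨⟨0, by omega⟩⟩
  obtain ⟨i₀, hi₀⟩ := exists_eq_ciSup_of_finite (f := fun i => ⨆ j, A i j)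
  obtain ⟨j₀, hj₀⟩ := exists_eq_ciSup_of_finite (f := fun j => A i₀ j)
  have hroom : m ≤ (({i₀, j₀} : Finset (Fin n))ᶜ).card := by
    rw [card_compl, Fintype.card_fin]
    have := card_le_two (a := i₀) (b := j₀)
    omega
  obtain ⟨U, hU, hUcard⟩ := exists_subset_card_eq hroom
  set σ := U.orderEmbOfFin hUcard
  have hX := colIndicator_mem_Xset (C := Fin.cons {i₀, j₀} fun j => {σ j})
    (Fin.cases (insert_nonempty _ _) fun _ => singleton_nonempty _)
    (pairwise_disjoint_cons_singleton σ.injective fun j =>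
      mem_compl.mp (hU (U.orderEmbOfFin_mem hUcard j)))
  refine ⟨_, hX, le_antisymm ?_ (trMax_maxMul_le_iSup_iSup hA hX)⟩
  rw [← hi₀, ← hj₀]
  exact le_trMax_maxMul A (j := 0) (by simp [colIndicator]) (by simp [colIndicator])

/-- For a nonnegative `n × n` matrix `A` and `1 ≤ k < n`, with
`c = min over k-element subsets S of max_{j ∈ S} a_{jj}` and `d = max_{i,j} a_{ij}`, we have
`W_max^k(A) ⊆ [c, d]` and both `c ∈ W_max^k(A)` and `d ∈ W_max^k(A)`. -/
theorem stmt_3 {n k : ℕ} (hk : 1 ≤ k) (hkn : k < n)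
    (A : Matrix (Fin n) (Fin n) ℝ) (hA : ∀ i j, 0 ≤ A i j) :
    Wmax k A ⊆ Set.Icc
        (⨅ S : {S : Finset (Fin n) // S.card = k}, ⨆ j : {x : Fin n // x ∈ S.1}, A j.1 j.1)
        (⨆ i, ⨆ j, A i j) ∧
    (⨅ S : {S : Finset (Fin n) // S.card = k}, ⨆ j : {x : Fin n // x ∈ S.1}, A j.1 j.1)
        ∈ Wmax k A ∧
    (⨆ i, ⨆ j, A i j) ∈ Wmax k A := by
  have : NeZero k := ⟨by omega⟩
  refine ⟨?_, iInf_iSup_diag_mem_Wmax hkn.le hA, iSup_iSup_mem_Wmax hkn hA⟩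
  rintro _ ⟨X, hX, rfl⟩
  exact ⟨iInf_iSup_diag_le_trMax_maxMul A hX, trMax_maxMul_le_iSup_iSup hA hX⟩
end

section
/- Let 1 ≤ k ≤ n and X ∈ 𝒳_{n×k} with columns x^{(1)},…,x^{(k)}. Then: (i) for each i ≠ j in {1,…,k} and each row l ∈ {1,…,n}, either x^{(i)}_l = 0 or x^{(j)}_l = 0; (ii) every entry of X lies in [0,1]; (iii) for each column i there exists a row l with x^{(i)}_l = 1 and x^{(j)}_l = 0 for all j ≠ i; consequently (iv) X has a k×k submatrix (obtained by selecting k rows) that is a permutation matrix. -/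
open Matrix

/-! Every product `X l i * X l j` is bounded by the corresponding entry `δ_ij` of `Xᵀ ⊗ X = I`,
which gives disjoint supports and entries in `[0,1]`; over the finitely many rows the
maximum `1` of `X l i ^ 2` is attained, and disjointness then forces the other columns to
vanish in that row. These rows pick out an identity submatrix. -/

namespace Xset

variable {n k : ℕ} {X : Matrix (Fin n) (Fin k) ℝ}

theorem iSup_mul_eq_one_apply (hX : X ∈ Xset n k) (i j : Fin k) :
    ⨆ l, X l i * X l j = (1 : Matrix (Fin k) (Fin k) ℝ) i j :=
  congrFun (congrFun hX.2 i) j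

theorem mul_le_one_apply (hX : X ∈ Xset n k) (l : Fin n) (i j : Fin k) :
    X l i * X l j ≤ (1 : Matrix (Fin k) (Fin k) ℝ) i j :=
  iSup_mul_eq_one_apply hX i j ▸
    le_ciSup (f := fun l => X l i * X l j) (Set.finite_range _).bddAbove l

theorem eq_zero_or_eq_zero_of_ne (hX : X ∈ Xset n k) {i j : Fin k} (hij : i ≠ j)
    (l : Fin n) : X l i = 0 ∨ X l j = 0 := by
  have hle : X l i * X l j ≤ 0 := by
    simpa [Matrix.one_apply_ne hij] using mul_le_one_apply hX l i j
  exact mul_eq_zero.mp (hle.antisymm (mul_nonneg (hX.1 l i) (hX.1 l j)))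

theorem mem_Icc (hX : X ∈ Xset n k) (l : Fin n) (i : Fin k) : X l i ∈ Set.Icc (0 : ℝ) 1 := by
  have hsq : X l i * X l i ≤ 1 := by simpa using mul_le_one_apply hX l i i
  exact ⟨hX.1 l i, by nlinarith [hX.1 l i]⟩

theorem exists_eq_one (hX : X ∈ Xset n k) (i : Fin k) : ∃ l, X l i = 1 := by
  have hsup : ⨆ l, X l i * X l i = 1 := by simpa using iSup_mul_eq_one_apply hX i i
  -- an empty supremum of reals is `0`, so there is at least one row
  have : Nonempty (Fin n) := by
    by_contra h
    rw [not_nonempty_iff] at h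
    simp at hsup
  obtain ⟨l, hl⟩ := exists_eq_ciSup_of_finite (f := fun l => X l i * X l i)
  refine ⟨l, ?_⟩
  nlinarith [hX.1 l i, hl.trans hsup]

theorem exists_row_eq_single (hX : X ∈ Xset n k) (i : Fin k) :
    ∃ l, X l i = 1 ∧ ∀ j, j ≠ i → X l j = 0 := by
  obtain ⟨l, hl⟩ := exists_eq_one hX i
  refine ⟨l, hl, fun j hji => ?_⟩
  simpa [hl] using eq_zero_or_eq_zero_of_ne hX hji.symm l

theorem exists_injective_submatrix_eq_one (hX : X ∈ Xset n k) :
    ∃ r : Fin k → Fin n, Function.Injective r ∧ X.submatrix r id = 1 := by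
  choose r hr_one hr_zero using exists_row_eq_single hX
  have hsub : X.submatrix r id = 1 := by
    ext p q
    rcases eq_or_ne p q with rfl | hpq
    · simp [hr_one]
    · simp [Matrix.one_apply_ne hpq, hr_zero p q hpq.symm]
  refine ⟨r, fun p q hpq => ?_, hsub⟩
  by_contra hne
  have h := congrFun (congrFun hsub p) q
  simp [hpq, hr_one q, Matrix.one_apply_ne hne] at h

end Xset

theorem stmt_5_general {n k : ℕ}
    (X : Matrix (Fin n) (Fin k) ℝ) (hX : X ∈ Xset n k) :
    (∀ i j : Fin k, i ≠ j → ∀ l : Fin n, X l i = 0 ∨ X l j = 0) ∧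
    (∀ (l : Fin n) (i : Fin k), X l i ∈ Set.Icc (0 : ℝ) 1) ∧
    (∀ i : Fin k, ∃ l : Fin n, X l i = 1 ∧ ∀ j : Fin k, j ≠ i → X l j = 0) ∧
    (∃ r : Fin k → Fin n, Function.Injective r ∧ ∃ σ : Equiv.Perm (Fin k),
      ∀ p q : Fin k, X (r p) q = if σ p = q then 1 else 0) := by
  obtain ⟨r, hr, hsub⟩ := Xset.exists_injective_submatrix_eq_one hX
  refine ⟨fun i j hij => Xset.eq_zero_or_eq_zero_of_ne hX hij, Xset.mem_Icc hX,
    Xset.exists_row_eq_single hX, r, hr, Equiv.refl _, fun p q => ?_⟩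
  exact (congrFun (congrFun hsub p) q).trans Matrix.one_apply

/-- Properties of `X ∈ 𝒳_{n×k}` (columns `x^{(i)} = fun l => X l i`):
(i) two distinct columns have disjoint supports; (ii) all entries lie in `[0,1]`;
(iii) each column has a row where it is `1` and all other columns vanish;
(iv) `X` has a `k × k` submatrix (a choice of `k` rows) that is a permutation matrix. -/
theorem stmt_5 {n k : ℕ} (hk : 1 ≤ k) (hkn : k ≤ n)
    (X : Matrix (Fin n) (Fin k) ℝ) (hX : X ∈ Xset n k) :
    (∀ i j : Fin k, i ≠ j → ∀ l : Fin n, X l i = 0 ∨ X l j = 0) ∧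
    (∀ (l : Fin n) (i : Fin k), X l i ∈ Set.Icc (0 : ℝ) 1) ∧
    (∀ i : Fin k, ∃ l : Fin n, X l i = 1 ∧ ∀ j : Fin k, j ≠ i → X l j = 0) ∧
    (∃ r : Fin k → Fin n, Function.Injective r ∧ ∃ σ : Equiv.Perm (Fin k),
      ∀ p q : Fin k, X (r p) q = if σ p = q then 1 else 0) :=
  stmt_5_general X hX
end

section
/- Let A ∈ M_n(ℝ₊), 1 ≤ k ≤ n, and α, β ∈ ℝ₊. Then W_max^k(α A ⊕ β I_n) = α W_max^k(A) ⊕ β, i.e. the max k-numerical range of the matrix with entries max{α a_{ij}, β δ_{ij}} equals { max{α w, β} : w ∈ W_max^k(A) }. -/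
open Matrix

section helpers

variable {ι : Type*} [Fintype ι] [Nonempty ι]

private lemma ciSup_max' (f g : ι → ℝ) :
    (⨆ i, max (f i) (g i)) = max (⨆ i, f i) (⨆ i, g i) := by
  apply le_antisymm
  · exact ciSup_le fun i => max_le_max
      (le_ciSup (Set.Finite.bddAbove (Set.finite_range f)) i)
      (le_ciSup (Set.Finite.bddAbove (Set.finite_range g)) i)
  · exact max_le
      (ciSup_mono (Set.Finite.bddAbove (Set.finite_range _)) fun i => le_max_left _ _)
      (ciSup_mono (Set.Finite.bddAbove (Set.finite_range _)) fun i => le_max_right _ _)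

private lemma ciSup_ite' [DecidableEq ι] (p : ι) {c : ℝ} (hc : 0 ≤ c) :
    (⨆ q, if q = p then c else 0) = c := by
  apply le_antisymm
  · exact ciSup_le fun q => by split <;> simp [hc]
  · simpa using le_ciSup (Set.Finite.bddAbove (Set.finite_range
      (fun q => if q = p then c else 0))) p

end helpers

private lemma key_lemma {n k : ℕ} (hk : 1 ≤ k) (hkn : k ≤ n)
    (A : Matrix (Fin n) (Fin n) ℝ)
    (α β : ℝ) (hα : 0 ≤ α) (hβ : 0 ≤ β)
    (X : Matrix (Fin n) (Fin k) ℝ) (hX : X ∈ Xset n k) :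
    trMax (maxMul (maxMul Xᵀ
        (Matrix.of fun i j => max (α * A i j) (if i = j then β else 0))) X)
      = max (α * trMax (maxMul (maxMul Xᵀ A) X)) β := by
  haveI : Nonempty (Fin k) := Fin.pos_iff_nonempty.mp hk
  haveI : Nonempty (Fin n) := Fin.pos_iff_nonempty.mp (hk.trans hkn)
  obtain ⟨hXnn, hXI⟩ := hX
  have hdiag : ∀ j, (⨆ p, X p j * X p j) = 1 := by
    intro j
    have := congrFun (congrFun hXI j) j
    simpa [maxMul, Matrix.one_apply] using this
  set B : Matrix (Fin n) (Fin n) ℝ :=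
    Matrix.of fun i j => max (α * A i j) (if i = j then β else 0) with hB
  have hrow : ∀ (j : Fin k) (p : Fin n),
      (maxMul Xᵀ B) j p = max (α * (maxMul Xᵀ A) j p) (β * X p j) := by
    intro j p
    simp only [maxMul, Matrix.of_apply, Matrix.transpose_apply, hB]
    calc (⨆ q, X q j * max (α * A q p) (if q = p then β else 0))
        = ⨆ q, max (X q j * (α * A q p)) (X q j * (if q = p then β else 0)) := by
          refine iSup_congr fun q => ?_
          rw [mul_max_of_nonneg _ _ (hXnn q j)]
      _ = max (⨆ q, X q j * (α * A q p)) (⨆ q, X q j * (if q = p then β else 0)) :=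
          ciSup_max' _ _
      _ = max (α * ⨆ q, X q j * A q p) (β * X p j) := by
          congr 1
          · rw [Real.mul_iSup_of_nonneg hα]
            refine iSup_congr fun q => by ring
          · have : (fun q => X q j * (if q = p then β else 0)) =
                fun q => if q = p then β * X p j else 0 := by
              funext q
              by_cases h : q = p <;> simp [h, mul_comm]
            rw [this, ciSup_ite' p (mul_nonneg hβ (hXnn p j))]
  have hMjj : ∀ (j : Fin k),
      (maxMul (maxMul Xᵀ B) X) j j = max (α * (maxMul (maxMul Xᵀ A) X) j j) β := by
    intro j
    simp only [maxMul, Matrix.of_apply]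
    calc (⨆ p, (maxMul Xᵀ B) j p * X p j)
        = ⨆ p, max (α * ((maxMul Xᵀ A) j p * X p j)) (β * (X p j * X p j)) := by
          refine iSup_congr fun p => ?_
          rw [hrow j p, max_mul_of_nonneg _ _ (hXnn p j)]
          ring_nf
      _ = max (⨆ p, α * ((maxMul Xᵀ A) j p * X p j)) (⨆ p, β * (X p j * X p j)) :=
          ciSup_max' _ _
      _ = max (α * ⨆ p, (maxMul Xᵀ A) j p * X p j) β := by
          rw [← Real.mul_iSup_of_nonneg hα, ← Real.mul_iSup_of_nonneg hβ, hdiag j, mul_one]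
  calc trMax (maxMul (maxMul Xᵀ B) X)
      = ⨆ j, max (α * (maxMul (maxMul Xᵀ A) X) j j) β := by
        refine iSup_congr hMjj
    _ = max (⨆ j, α * (maxMul (maxMul Xᵀ A) X) j j) (⨆ _ : Fin k, β) :=
        ciSup_max' _ _
    _ = max (α * trMax (maxMul (maxMul Xᵀ A) X)) β := by
        rw [← Real.mul_iSup_of_nonneg hα, ciSup_const]
        rfl

/-- For nonnegative `A`, `1 ≤ k ≤ n` and `α, β ≥ 0`:
`W_max^k(α A ⊕ β I_n) = α W_max^k(A) ⊕ β`, where `(α A ⊕ β I_n)_{ij} = max (α a_{ij}) (β δ_{ij})`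
and `α S ⊕ β = { max (α w) β : w ∈ S }`. -/
theorem stmt_6 {n k : ℕ} (hk : 1 ≤ k) (hkn : k ≤ n)
    (A : Matrix (Fin n) (Fin n) ℝ) (hA : ∀ i j, 0 ≤ A i j)
    (α β : ℝ) (hα : 0 ≤ α) (hβ : 0 ≤ β) :
    Wmax k (Matrix.of fun i j => max (α * A i j) (if i = j then β else 0)) =
      {z | ∃ w ∈ Wmax k A, z = max (α * w) β} := by
  ext z
  simp only [Wmax, Set.mem_setOf_eq]
  constructor
  · rintro ⟨X, hX, rfl⟩
    exact ⟨trMax (maxMul (maxMul Xᵀ A) X), ⟨X, hX, rfl⟩,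
      key_lemma hk hkn A α β hα hβ X hX⟩
  · rintro ⟨w, ⟨X, hX, rfl⟩, rfl⟩
    exact ⟨X, hX, (key_lemma hk hkn A α β hα hβ X hX).symm⟩
end

section
/- Let A ∈ M_n(ℝ₊), 1 ≤ k ≤ n, and let U ∈ M_n(ℝ₊) be a permutation matrix (equivalently Uᵗ⊗U = U⊗Uᵗ = I_n). Then W_max^k(Uᵗ⊗A⊗U) = W_max^k(A). -/
open Matrix

lemma ciSup_swap' {m l : ℕ} (f : Fin (m+1) → Fin (l+1) → ℝ) :
    ⨆ i, ⨆ j, f i j = ⨆ j, ⨆ i, f i j := by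
  apply le_antisymm
  · refine ciSup_le fun i => ciSup_le fun j => ?_
    calc f i j ≤ ⨆ i', f i' j := le_ciSup (f := fun i' => f i' j)
          (Set.Finite.bddAbove (Set.finite_range _)) i
      _ ≤ ⨆ j', ⨆ i', f i' j' := le_ciSup (f := fun j' => ⨆ i', f i' j')
          (Set.Finite.bddAbove (Set.finite_range _)) j
  · refine ciSup_le fun j => ciSup_le fun i => ?_
    calc f i j ≤ ⨆ j', f i j' := le_ciSup (f := fun j' => f i j')
          (Set.Finite.bddAbove (Set.finite_range _)) j
      _ ≤ ⨆ i', ⨆ j', f i' j' := le_ciSup (f := fun i' => ⨆ j', f i' j')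
          (Set.Finite.bddAbove (Set.finite_range _)) i

lemma maxMul_nonneg {n m l : ℕ} {A : Matrix (Fin n) (Fin m) ℝ}
    {B : Matrix (Fin m) (Fin l) ℝ} (hA : ∀ i j, 0 ≤ A i j) (hB : ∀ i j, 0 ≤ B i j) :
    ∀ i j, 0 ≤ maxMul A B i j := by
  intro i j
  rcases Nat.eq_zero_or_pos m with hm | hm
  · subst hm; simp [maxMul, iSup_of_empty', Real.sSup_empty]
  · show (0:ℝ) ≤ ⨆ p, A i p * B p j
    have h0 : (0:ℝ) ≤ A i ⟨0, hm⟩ * B ⟨0, hm⟩ j := mul_nonneg (hA _ _) (hB _ _)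
    exact h0.trans (le_ciSup (Set.Finite.bddAbove
      (Set.finite_range fun p => A i p * B p j)) ⟨0, hm⟩)

lemma maxMul_assoc {n m l r : ℕ} (A : Matrix (Fin n) (Fin (m+1)) ℝ)
    (B : Matrix (Fin (m+1)) (Fin (l+1)) ℝ) (C : Matrix (Fin (l+1)) (Fin r) ℝ)
    (hA : ∀ i j, 0 ≤ A i j) (hC : ∀ i j, 0 ≤ C i j) :
    maxMul (maxMul A B) C = maxMul A (maxMul B C) := by
  ext i j
  show (⨆ q, (⨆ p, A i p * B p q) * C q j) = ⨆ p, A i p * ⨆ q, B p q * C q j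
  calc (⨆ q, (⨆ p, A i p * B p q) * C q j)
      = ⨆ q, ⨆ p, A i p * B p q * C q j := by
        refine iSup_congr fun q => ?_
        rw [Real.iSup_mul_of_nonneg (hC q j)]
    _ = ⨆ p, ⨆ q, A i p * B p q * C q j := (ciSup_swap' _).symm
    _ = ⨆ p, A i p * ⨆ q, B p q * C q j := by
        refine iSup_congr fun p => ?_
        rw [Real.mul_iSup_of_nonneg (hA i p)]
        simp [mul_assoc]

lemma maxMul_one {n m : ℕ} (A : Matrix (Fin n) (Fin (m+1)) ℝ) (hA : ∀ i j, 0 ≤ A i j) :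
    maxMul A 1 = A := by
  ext i j
  show (⨆ p, A i p * (1 : Matrix (Fin (m+1)) (Fin (m+1)) ℝ) p j) = A i j
  refine le_antisymm (ciSup_le fun p => ?_) ?_
  · rcases eq_or_ne p j with rfl | h
    · simp [Matrix.one_apply]
    · simp [Matrix.one_apply, h, hA]
  · have := le_ciSup (Set.Finite.bddAbove
      (Set.finite_range fun p => A i p * (1 : Matrix (Fin (m+1)) (Fin (m+1)) ℝ) p j)) j
    simpa [Matrix.one_apply] using this

lemma one_maxMul {n m : ℕ} (A : Matrix (Fin (n+1)) (Fin m) ℝ) (hA : ∀ i j, 0 ≤ A i j) :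
    maxMul 1 A = A := by
  ext i j
  show (⨆ p, (1 : Matrix (Fin (n+1)) (Fin (n+1)) ℝ) i p * A p j) = A i j
  refine le_antisymm (ciSup_le fun p => ?_) ?_
  · rcases eq_or_ne i p with rfl | h
    · simp [Matrix.one_apply]
    · simp [Matrix.one_apply, h, hA]
  · have := le_ciSup (Set.Finite.bddAbove
      (Set.finite_range fun p => (1 : Matrix (Fin (n+1)) (Fin (n+1)) ℝ) i p * A p j)) i
    simpa [Matrix.one_apply] using this

lemma maxMul_transpose {n m l : ℕ} (A : Matrix (Fin n) (Fin m) ℝ)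
    (B : Matrix (Fin m) (Fin l) ℝ) : (maxMul A B)ᵀ = maxMul Bᵀ Aᵀ := by
  ext i j
  show (⨆ p, A j p * B p i) = ⨆ p, B p i * A j p
  exact iSup_congr fun p => mul_comm _ _

lemma Wmax_sub {n k : ℕ} (hk : 1 ≤ k) (hkn : k ≤ n)
    (A U : Matrix (Fin n) (Fin n) ℝ)
    (hA : ∀ i j, 0 ≤ A i j) (hU : ∀ i j, 0 ≤ U i j)
    (hU1 : maxMul Uᵀ U = 1) :
    Wmax k (maxMul (maxMul Uᵀ A) U) ⊆ Wmax k A := by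
  obtain ⟨n, rfl⟩ : ∃ m, n = m + 1 := ⟨n - 1, by omega⟩
  obtain ⟨k, rfl⟩ : ∃ m, k = m + 1 := ⟨k - 1, by omega⟩
  rintro z ⟨X, ⟨hX0, hX1⟩, rfl⟩
  have hXt : ∀ i j, 0 ≤ Xᵀ i j := fun i j => hX0 j i
  have hUt : ∀ i j, 0 ≤ Uᵀ i j := fun i j => hU j i
  have hUX : ∀ i j, 0 ≤ maxMul U X i j := maxMul_nonneg hU hX0
  have hAUX : ∀ i j, 0 ≤ maxMul A (maxMul U X) i j := maxMul_nonneg hA hUX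
  have hUtA : ∀ i j, 0 ≤ maxMul Uᵀ A i j := maxMul_nonneg hUt hA
  have hXtUt : ∀ i j, 0 ≤ maxMul Xᵀ Uᵀ i j := maxMul_nonneg hXt hUt
  refine ⟨maxMul U X, ⟨hUX, ?_⟩, ?_⟩
  · rw [maxMul_transpose, maxMul_assoc Xᵀ Uᵀ (maxMul U X) hXt hUX,
      ← maxMul_assoc Uᵀ U X hUt hX0, hU1, one_maxMul X hX0, hX1]
  · congr 1
    rw [maxMul_transpose]
    calc maxMul (maxMul Xᵀ (maxMul (maxMul Uᵀ A) U)) X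
        = maxMul Xᵀ (maxMul (maxMul (maxMul Uᵀ A) U) X) :=
          maxMul_assoc _ _ _ hXt hX0
      _ = maxMul Xᵀ (maxMul (maxMul Uᵀ A) (maxMul U X)) := by
          rw [maxMul_assoc _ _ _ hUtA hX0]
      _ = maxMul Xᵀ (maxMul Uᵀ (maxMul A (maxMul U X))) := by
          rw [maxMul_assoc _ _ _ hUt hUX]
      _ = maxMul (maxMul Xᵀ Uᵀ) (maxMul A (maxMul U X)) :=
          (maxMul_assoc _ _ _ hXt hAUX).symm
      _ = maxMul (maxMul (maxMul Xᵀ Uᵀ) A) (maxMul U X) :=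
          (maxMul_assoc _ _ _ hXtUt hUX).symm

/-- For nonnegative `A`, `1 ≤ k ≤ n`, and a max-unitary (i.e. permutation)
matrix `U` (nonnegative with `Uᵀ⊗U = U⊗Uᵀ = I_n`): `W_max^k(Uᵀ⊗A⊗U) = W_max^k(A)`. -/
theorem stmt_8 {n k : ℕ} (hk : 1 ≤ k) (hkn : k ≤ n)
    (A U : Matrix (Fin n) (Fin n) ℝ)
    (hA : ∀ i j, 0 ≤ A i j) (hU : ∀ i j, 0 ≤ U i j)
    (hU1 : maxMul Uᵀ U = 1) (hU2 : maxMul U Uᵀ = 1) :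
    Wmax k (maxMul (maxMul Uᵀ A) U) = Wmax k A := by
  obtain ⟨m, rfl⟩ : ∃ m, n = m + 1 := ⟨n - 1, by omega⟩
  have hUt : ∀ i j, 0 ≤ Uᵀ i j := fun i j => hU j i
  have hUtA : ∀ i j, 0 ≤ maxMul Uᵀ A i j := maxMul_nonneg hUt hA
  have hB : ∀ i j, 0 ≤ maxMul (maxMul Uᵀ A) U i j := maxMul_nonneg hUtA hU
  apply le_antisymm
  · exact Wmax_sub hk hkn A U hA hU hU1
  · have key : maxMul (maxMul Uᵀᵀ (maxMul (maxMul Uᵀ A) U)) Uᵀ = A := by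
      rw [Matrix.transpose_transpose]
      have : maxMul U (maxMul (maxMul Uᵀ A) U)
          = maxMul A U := by
        rw [← maxMul_assoc U (maxMul Uᵀ A) U hU hU,
          ← maxMul_assoc U Uᵀ A hU hA, hU2, one_maxMul A hA]
      rw [this, maxMul_assoc A U Uᵀ hA hUt, hU2, maxMul_one A hA]
    have := Wmax_sub hk hkn (maxMul (maxMul Uᵀ A) U) Uᵀ hB hUt
      (by rw [Matrix.transpose_transpose]; exact hU2)
    rwa [key] at this
end

section
/- Let A ∈ M_n(ℝ₊) and let B ∈ M_m(ℝ₊) be a principal submatrix of A (the submatrix of A on a set of m rows and the same m columns). If k ≤ m, then W_max^k(B) ⊆ W_max^k(A). Consequently, if V = [e_{i_1}, e_{i_2}, …, e_{i_s}] ∈ M_{n×s}(ℝ₊) with 1 ≤ k ≤ s ≤ n and distinct indices i_1,…,i_s (e_l being standard basis vectors of ℝⁿ), then W_max^k(Vᵗ⊗A⊗V) ⊆ W_max^k(A), with equality when s = n. -/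
open Matrix

/-- Sup over `Fin n` of a function supported at one point with nonnegative value. -/
lemma sup_single {n : ℕ} [Nonempty (Fin n)] (i₀ : Fin n) (a : ℝ) (ha : 0 ≤ a) :
    (⨆ i : Fin n, if i = i₀ then a else 0) = a := by
  apply le_antisymm
  · exact ciSup_le fun i => by split <;> simp [ha]
  · simpa using le_ciSup (Finite.bddAbove_range fun i : Fin n => if i = i₀ then a else 0) i₀

/-- Sup of an extension-by-zero along an injection equals the original sup. -/
lemma sup_extend {m n : ℕ} [Nonempty (Fin m)] {e : Fin m → Fin n} (he : Function.Injective e)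
    (g : Fin m → ℝ) (hg : ∀ p, 0 ≤ g p) :
    (⨆ i : Fin n, Function.extend e g 0 i) = ⨆ p, g p := by
  have hn : Nonempty (Fin n) := ⟨e (Classical.arbitrary _)⟩
  apply le_antisymm
  · apply ciSup_le
    intro i
    by_cases h : ∃ p, e p = i
    · obtain ⟨p, rfl⟩ := h
      rw [he.extend_apply]
      exact le_ciSup (Finite.bddAbove_range _) p
    · rw [Function.extend_apply' _ _ _ h]
      exact le_ciSup_of_le (Finite.bddAbove_range _) (Classical.arbitrary _)
        (by simpa using hg (Classical.arbitrary _))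
  · apply ciSup_le
    intro p
    have : g p = Function.extend e g 0 (e p) := (he.extend_apply g 0 p).symm
    rw [this]
    exact le_ciSup (Finite.bddAbove_range _) (e p)

/-- Principal submatrix inclusion for the max numerical range. -/
lemma wmax_sub {n m k : ℕ} (A : Matrix (Fin n) (Fin n) ℝ) (hA : ∀ i j, 0 ≤ A i j)
    (e : Fin m → Fin n) (he : Function.Injective e) (hm : 1 ≤ m) :
    Wmax k (A.submatrix e e) ⊆ Wmax k A := by
  have hme : Nonempty (Fin m) := Fin.pos_iff_nonempty.mp hm
  have hn : Nonempty (Fin n) := ⟨e (Classical.arbitrary _)⟩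
  rintro z ⟨X, hX, rfl⟩
  obtain ⟨hX0, hXI⟩ := hX
  set Y : Matrix (Fin n) (Fin k) ℝ :=
    Matrix.of fun i j => Function.extend e (fun p => X p j) 0 i with hYdef
  have hYapp : ∀ i j, Y i j = Function.extend e (fun p => X p j) 0 i := fun _ _ => rfl
  have hY0 : ∀ i j, 0 ≤ Y i j := by
    intro i j
    rw [hYapp]
    by_cases hp : ∃ p, e p = i
    · obtain ⟨p, rfl⟩ := hp; rw [he.extend_apply]; exact hX0 _ _
    · rw [Function.extend_apply' _ _ _ hp]; simp
  -- Yᵀ ⊗ Y = Xᵀ ⊗ X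
  have hYY : maxMul Yᵀ Y = maxMul Xᵀ X := by
    ext j j'
    show (⨆ i, Y i j * Y i j') = ⨆ p, X p j * X p j'
    have hfun : (fun i => Y i j * Y i j') =
        Function.extend e (fun p => X p j * X p j') 0 := by
      funext i
      by_cases hp : ∃ p, e p = i
      · obtain ⟨p, rfl⟩ := hp
        rw [hYapp, hYapp, he.extend_apply, he.extend_apply, he.extend_apply]
      · rw [hYapp, hYapp, Function.extend_apply' _ _ _ hp, Function.extend_apply' _ _ _ hp,
          Function.extend_apply' _ _ _ hp]
        simp
    rw [hfun, sup_extend he _ fun p => mul_nonneg (hX0 _ _) (hX0 _ _)]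
  -- Yᵀ ⊗ A ⊗ Y = Xᵀ ⊗ B ⊗ X
  have key : maxMul (maxMul Yᵀ A) Y = maxMul (maxMul Xᵀ (A.submatrix e e)) X := by
    ext j j'
    show (⨆ i', (maxMul Yᵀ A) j i' * Y i' j') =
      ⨆ p', (maxMul Xᵀ (A.submatrix e e)) j p' * X p' j'
    have hCe : ∀ p', (maxMul Yᵀ A) j (e p') = (maxMul Xᵀ (A.submatrix e e)) j p' := by
      intro p'
      show (⨆ i, Y i j * A i (e p')) = ⨆ p, X p j * A (e p) (e p')
      have hfun : (fun i => Y i j * A i (e p')) =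
          Function.extend e (fun p => X p j * A (e p) (e p')) 0 := by
        funext i
        by_cases hp : ∃ p, e p = i
        · obtain ⟨p, rfl⟩ := hp
          rw [hYapp, he.extend_apply, he.extend_apply]
        · rw [hYapp, Function.extend_apply' _ _ _ hp, Function.extend_apply' _ _ _ hp]
          simp
      rw [hfun, sup_extend he _ fun p => mul_nonneg (hX0 _ _) (hA _ _)]
    have hfun : (fun i' => (maxMul Yᵀ A) j i' * Y i' j') =
        Function.extend e (fun p' => (maxMul Xᵀ (A.submatrix e e)) j p' * X p' j') 0 := by
      funext i'
      by_cases hp : ∃ p', e p' = i'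
      · obtain ⟨p', rfl⟩ := hp
        rw [hYapp, he.extend_apply, he.extend_apply, hCe]
      · rw [hYapp, Function.extend_apply' _ _ _ hp, Function.extend_apply' _ _ _ hp]
        simp
    have hnn : ∀ p', 0 ≤ (maxMul Xᵀ (A.submatrix e e)) j p' * X p' j' := by
      intro p'
      refine mul_nonneg (Real.iSup_nonneg fun p => ?_) (hX0 _ _)
      exact mul_nonneg (hX0 _ _) (hA _ _)
    calc (⨆ i', (maxMul Yᵀ A) j i' * Y i' j')
        = ⨆ i', Function.extend e
            (fun p' => (maxMul Xᵀ (A.submatrix e e)) j p' * X p' j') 0 i' := by rw [hfun]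
      _ = _ := sup_extend he _ hnn
  exact ⟨Y, ⟨hY0, by rw [hYY, hXI]⟩, congrArg trMax key.symm⟩

/-- `Vᵀ ⊗ A ⊗ V = A.submatrix f f` where `V` has columns `e_{f j}`. -/
lemma V_conj {n s : ℕ} [Nonempty (Fin n)] (A : Matrix (Fin n) (Fin n) ℝ)
    (hA : ∀ i j, 0 ≤ A i j) (f : Fin s → Fin n) :
    maxMul (maxMul (Matrix.of fun (i : Fin n) (j : Fin s) => if i = f j then (1:ℝ) else 0)ᵀ A)
      (Matrix.of fun (i : Fin n) (j : Fin s) => if i = f j then (1:ℝ) else 0)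
      = A.submatrix f f := by
  set V : Matrix (Fin n) (Fin s) ℝ :=
    Matrix.of fun (i : Fin n) (j : Fin s) => if i = f j then (1:ℝ) else 0 with hV
  ext j j'
  have h1 : ∀ i', (maxMul Vᵀ A) j i' = A (f j) i' := by
    intro i'
    show (⨆ i, (if i = f j then (1:ℝ) else 0) * A i i') = _
    rw [show (fun i => (if i = f j then (1:ℝ) else 0) * A i i')
        = fun i => if i = f j then A (f j) i' else 0 from
      funext fun i => by by_cases h : i = f j <;> simp [h]]
    exact sup_single _ _ (hA _ _)
  show (⨆ i', (maxMul Vᵀ A) j i' * (if i' = f j' then (1:ℝ) else 0)) = A (f j) (f j')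
  rw [show (fun i' => (maxMul Vᵀ A) j i' * (if i' = f j' then (1:ℝ) else 0))
      = fun i' => if i' = f j' then A (f j) (f j') else 0 from
    funext fun i' => by by_cases h : i' = f j' <;> simp [h, h1]]
  exact sup_single _ _ (hA _ _)

/-- For nonnegative `A ∈ M_n(ℝ₊)`:
(1) if `B = A.submatrix e e` is a principal submatrix on `m` rows/columns (`e` injective)
and `1 ≤ k ≤ m`, then `W_max^k(B) ⊆ W_max^k(A)`;
(2) if `V = [e_{i_1}, …, e_{i_s}]` (distinct indices, `1 ≤ k ≤ s ≤ n`), then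
`W_max^k(Vᵀ⊗A⊗V) ⊆ W_max^k(A)`; (3) with equality when `s = n`. -/
theorem stmt_9 {n : ℕ} (A : Matrix (Fin n) (Fin n) ℝ) (hA : ∀ i j, 0 ≤ A i j) :
    (∀ (m k : ℕ) (e : Fin m → Fin n), Function.Injective e → 1 ≤ k → k ≤ m →
      Wmax k (A.submatrix e e) ⊆ Wmax k A) ∧
    (∀ (s k : ℕ) (f : Fin s → Fin n), Function.Injective f → 1 ≤ k → k ≤ s → s ≤ n →
      Wmax k (maxMul
          (maxMul (Matrix.of fun (i : Fin n) (j : Fin s) => if i = f j then (1:ℝ) else 0)ᵀ A)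
          (Matrix.of fun (i : Fin n) (j : Fin s) => if i = f j then (1:ℝ) else 0)) ⊆
        Wmax k A) ∧
    (∀ (k : ℕ) (f : Fin n → Fin n), Function.Injective f → 1 ≤ k → k ≤ n →
      Wmax k (maxMul
          (maxMul (Matrix.of fun (i : Fin n) (j : Fin n) => if i = f j then (1:ℝ) else 0)ᵀ A)
          (Matrix.of fun (i : Fin n) (j : Fin n) => if i = f j then (1:ℝ) else 0)) =
        Wmax k A) := by
  refine ⟨fun m k e he hk hkm => wmax_sub A hA e he (hk.trans hkm), ?_, ?_⟩
  · intro s k f hf hk hks hsn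
    have hn : Nonempty (Fin n) := Fin.pos_iff_nonempty.mp ((hk.trans hks).trans hsn)
    rw [V_conj A hA f]
    exact wmax_sub A hA f hf (hk.trans hks)
  · intro k f hf hk hkn
    have hn : Nonempty (Fin n) := Fin.pos_iff_nonempty.mp (hk.trans hkn)
    rw [V_conj A hA f]
    have hb : Function.Bijective f := Finite.injective_iff_bijective.mp hf
    set E := Equiv.ofBijective f hb with hE
    apply Set.Subset.antisymm
    · exact wmax_sub A hA f hf (hk.trans hkn)
    · have h2 := wmax_sub (A.submatrix f f) (fun i j => hA _ _) (⇑E.symm)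
        E.symm.injective (hk.trans hkn) (k := k)
      have h3 : (A.submatrix f f).submatrix (⇑E.symm) (⇑E.symm) = A := by
        rw [Matrix.submatrix_submatrix]
        have : f ∘ ⇑E.symm = id := funext fun i => E.apply_symm_apply i
        rw [this, Matrix.submatrix_id_id]
      rw [h3] at h2
      exact h2
end

section
/- Let A ∈ M_n(ℝ₊) and let k be a positive integer with k < n. Then W_max^{k+1}(A) ⊆ W_max^k(A). Consequently W_max^n(A) ⊆ W_max^{n-1}(A) ⊆ ⋯ ⊆ W_max^2(A) ⊆ W_max^1(A). -/
open Matrix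

private lemma ciSup_comp_eq {k m : ℕ} [Nonempty (Fin k)] [Nonempty (Fin m)]
    (f : Fin m → ℝ) (e : Fin k → Fin m)
    (i0 : Fin m) (hmax : ∀ j, f j ≤ f i0) (hi0 : ∃ c, e c = i0) :
    (⨆ c, f (e c)) = ⨆ i, f i := by
  apply le_antisymm
  · exact ciSup_le fun c => le_ciSup (Set.finite_range f).bddAbove (e c)
  · obtain ⟨c, hc⟩ := hi0
    refine ciSup_le fun j => (hmax j).trans ?_
    calc f i0 = f (e c) := by rw [hc]
    _ ≤ ⨆ c, f (e c) := le_ciSup (Set.finite_range fun c => f (e c)).bddAbove c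

private lemma step {n : ℕ} (A : Matrix (Fin n) (Fin n) ℝ) (k : ℕ) (hk : 1 ≤ k) :
    Wmax (k + 1) A ⊆ Wmax k A := by
  rintro z ⟨X, ⟨hX0, hXI⟩, rfl⟩
  have hk1 : Nonempty (Fin k) := ⟨⟨0, hk⟩⟩
  have hnt : Nontrivial (Fin (k + 1)) := Fin.nontrivial_iff_two_le.mpr (by omega)
  set M : Matrix (Fin (k+1)) (Fin (k+1)) ℝ := maxMul (maxMul Xᵀ A) X with hM
  obtain ⟨i0, hi0⟩ := Finite.exists_max (fun i => M i i)
  obtain ⟨j, hj⟩ := exists_ne i0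
  obtain ⟨c0, hc0⟩ := Fin.exists_succAbove_eq (Ne.symm hj)
  set e : Fin k → Fin (k+1) := j.succAbove with he
  have hinj : Function.Injective e := Fin.succAbove_right_injective
  set Y : Matrix (Fin n) (Fin k) ℝ := Matrix.of fun p c => X p (e c) with hY
  refine ⟨Y, ⟨fun i j => hX0 i (e j), ?_⟩, ?_⟩
  · ext i j
    have h1 : maxMul Yᵀ Y i j = maxMul Xᵀ X (e i) (e j) := rfl
    rw [h1, hXI]
    simp [Matrix.one_apply, hinj.eq_iff]
  · have h2 : trMax (maxMul (maxMul Yᵀ A) Y) = ⨆ c, M (e c) (e c) := rfl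
    have h3 : trMax M = ⨆ i, M i i := rfl
    rw [h3, h2]
    exact (ciSup_comp_eq (fun i => M i i) e i0 hi0 ⟨c0, hc0⟩).symm

theorem stmt_11 {n : ℕ} (A : Matrix (Fin n) (Fin n) ℝ) (hA : ∀ i j, 0 ≤ A i j) :
    (∀ k : ℕ, 1 ≤ k → k < n → Wmax (k + 1) A ⊆ Wmax k A) ∧
    (∀ k l : ℕ, 1 ≤ k → k ≤ l → l ≤ n → Wmax l A ⊆ Wmax k A) := by
  refine ⟨fun k hk _ => step A k hk, fun k l hk hkl hln => ?_⟩
  induction l, hkl using Nat.le_induction with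
  | base => exact subset_rfl
  | succ m hm ih => exact (step A m (hk.trans hm)).trans (ih (by omega))
end

section
/- Let A ∈ M_n(ℝ₊), 1 ≤ k ≤ n, and define f_A : 𝒳_{n×k} → ℝ₊ by f_A(X) = tr⊗(Xᵗ⊗A⊗X). Then for all X, Y ∈ 𝒳_{n×k}: |f_A(X) − f_A(Y)| ≤ ‖A‖ · ‖X⊗Xᵗ − Y⊗Yᵗ‖ ≤ ‖A‖ (‖X‖ + ‖Y‖) ‖X − Y‖. -/
open Matrix

/-- Sup-norm of a matrix: `‖M‖ = max_{i,j} |M i j|`. -/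
noncomputable def matNorm {m l : ℕ} (M : Matrix (Fin m) (Fin l) ℝ) : ℝ :=
  ⨆ i, ⨆ j, |M i j|

private lemma le_csup {ι : Type*} [Finite ι] (f : ι → ℝ) (i : ι) : f i ≤ ⨆ j, f j :=
  le_ciSup ((Set.finite_range f).bddAbove) i

private lemma abs_le_matNorm {m l : ℕ} (M : Matrix (Fin m) (Fin l) ℝ) (i : Fin m) (j : Fin l) :
    |M i j| ≤ matNorm M :=
  le_trans (le_csup (fun j => |M i j|) j) (le_csup (fun i => ⨆ j, |M i j|) i)

private lemma matNorm_nonneg' {m l : ℕ} [Nonempty (Fin m)] [Nonempty (Fin l)]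
    (M : Matrix (Fin m) (Fin l) ℝ) : 0 ≤ matNorm M :=
  le_trans (abs_nonneg _) (abs_le_matNorm M (Classical.arbitrary _) (Classical.arbitrary _))

private lemma matNorm_le {m l : ℕ} [Nonempty (Fin m)] [Nonempty (Fin l)] (M : Matrix (Fin m) (Fin l) ℝ) {c : ℝ}
    (h : ∀ i j, |M i j| ≤ c) : matNorm M ≤ c :=
  ciSup_le fun i => ciSup_le (h i)

private lemma abs_ciSup_sub {ι : Type*} [Fintype ι] [Nonempty ι] (f g : ι → ℝ) :
    |(⨆ i, f i) - ⨆ i, g i| ≤ ⨆ i, |f i - g i| := by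
  rw [abs_sub_le_iff]
  constructor
  · rw [sub_le_iff_le_add]
    refine ciSup_le fun i => ?_
    have h1 : f i ≤ g i + |f i - g i| := by
      have := le_abs_self (f i - g i); linarith
    have h2 := le_csup g i
    have h3 := le_csup (fun i => |f i - g i|) i
    linarith
  · rw [sub_le_iff_le_add]
    refine ciSup_le fun i => ?_
    have h1 : g i ≤ f i + |f i - g i| := by
      have := neg_abs_le (f i - g i); linarith
    have h2 := le_csup f i
    have h3 := le_csup (fun i => |f i - g i|) i
    linarith

/-- For nonnegative `A ∈ M_n(ℝ₊)`, `1 ≤ k ≤ n`, and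
`f_A(X) = tr⊗(Xᵀ⊗A⊗X)` on `𝒳_{n×k}`: for all `X, Y ∈ 𝒳_{n×k}`,
`|f_A(X) − f_A(Y)| ≤ ‖A‖·‖X⊗Xᵀ − Y⊗Yᵀ‖ ≤ ‖A‖(‖X‖+‖Y‖)‖X−Y‖`. -/
theorem stmt_15 {n k : ℕ} (hk : 1 ≤ k) (hkn : k ≤ n)
    (A : Matrix (Fin n) (Fin n) ℝ) (hA : ∀ i j, 0 ≤ A i j)
    (X Y : Matrix (Fin n) (Fin k) ℝ) (hX : X ∈ Xset n k) (hY : Y ∈ Xset n k) :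
    |trMax (maxMul (maxMul Xᵀ A) X) - trMax (maxMul (maxMul Yᵀ A) Y)| ≤
      matNorm A * matNorm (Matrix.of fun i j => maxMul X Xᵀ i j - maxMul Y Yᵀ i j) ∧
    matNorm A * matNorm (Matrix.of fun i j => maxMul X Xᵀ i j - maxMul Y Yᵀ i j) ≤
      matNorm A * (matNorm X + matNorm Y) *
        matNorm (Matrix.of fun i j => X i j - Y i j) := by
  haveI : Nonempty (Fin k) := Fin.pos_iff_nonempty.mp hk
  haveI : Nonempty (Fin n) := Fin.pos_iff_nonempty.mp (lt_of_lt_of_le hk hkn)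
  obtain ⟨hX0, -⟩ := hX
  obtain ⟨hY0, -⟩ := hY
  have hAnorm : 0 ≤ matNorm A := matNorm_nonneg' A
  -- entry of A is ≤ matNorm A
  have hAle : ∀ p q, A p q ≤ matNorm A := fun p q =>
    (le_abs_self _).trans (abs_le_matNorm A p q)
  -- key one-sided Lipschitz bound
  have key : ∀ (U V : Matrix (Fin n) (Fin k) ℝ), (∀ i j, 0 ≤ U i j) → (∀ i j, 0 ≤ V i j) →
      trMax (maxMul (maxMul Uᵀ A) U) ≤ trMax (maxMul (maxMul Vᵀ A) V) +
        matNorm A * matNorm (Matrix.of fun i j => maxMul U Uᵀ i j - maxMul V Vᵀ i j) := by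
    intro U V hU hV
    refine ciSup_le fun i => ?_
    show maxMul (maxMul Uᵀ A) U i i ≤ _
    simp only [maxMul, Matrix.of_apply, transpose_apply]
    refine ciSup_le fun q => ?_
    rw [Real.iSup_mul_of_nonneg (hU q i)]
    refine ciSup_le fun p => ?_
    -- term : U p i * A p q * U q i
    have h1 : U p i * U q i ≤ ⨆ j, U p j * U q j := le_csup (fun j => U p j * U q j) i
    have hd : (⨆ j, U p j * U q j) ≤ (⨆ j, V p j * V q j) +
        |(Matrix.of fun i j => maxMul U Uᵀ i j - maxMul V Vᵀ i j) p q| := by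
      have : (Matrix.of fun i j => maxMul U Uᵀ i j - maxMul V Vᵀ i j) p q
          = (⨆ j, U p j * U q j) - (⨆ j, V p j * V q j) := by
        simp [maxMul]
      rw [this]
      have := le_abs_self ((⨆ j, U p j * U q j) - (⨆ j, V p j * V q j))
      linarith
    have h3 : A p q * (⨆ j, V p j * V q j) ≤ trMax (maxMul (maxMul Vᵀ A) V) := by
      rw [Real.mul_iSup_of_nonneg (hA p q)]
      refine ciSup_le fun j => ?_
      have s1 : V p j * A p q ≤ ⨆ p', Vᵀ j p' * A p' q :=
        le_csup (fun p' => Vᵀ j p' * A p' q) p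
      have s2 : (V p j * A p q) * V q j ≤ (⨆ p', Vᵀ j p' * A p' q) * V q j :=
        mul_le_mul_of_nonneg_right s1 (hV q j)
      have s3 : (⨆ p', Vᵀ j p' * A p' q) * V q j ≤ maxMul (maxMul Vᵀ A) V j j := by
        have : maxMul (maxMul Vᵀ A) V j j
            = ⨆ q', (⨆ p', Vᵀ j p' * A p' q') * V q' j := by simp [maxMul]
        rw [this]
        exact le_csup (fun q' => (⨆ p', Vᵀ j p' * A p' q') * V q' j) q
      have s4 : maxMul (maxMul Vᵀ A) V j j ≤ trMax (maxMul (maxMul Vᵀ A) V) :=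
        le_csup (fun j => maxMul (maxMul Vᵀ A) V j j) j
      calc A p q * (V p j * V q j) = (V p j * A p q) * V q j := by ring
        _ ≤ _ := le_trans s2 (le_trans s3 s4)
    have h4 : A p q * |(Matrix.of fun i j => maxMul U Uᵀ i j - maxMul V Vᵀ i j) p q|
        ≤ matNorm A * matNorm (Matrix.of fun i j => maxMul U Uᵀ i j - maxMul V Vᵀ i j) :=
      mul_le_mul (hAle p q) (abs_le_matNorm _ p q) (abs_nonneg _) hAnorm
    calc U p i * A p q * U q i = A p q * (U p i * U q i) := by ring
      _ ≤ A p q * ((⨆ j, V p j * V q j)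
          + |(Matrix.of fun i j => maxMul U Uᵀ i j - maxMul V Vᵀ i j) p q|) :=
        mul_le_mul_of_nonneg_left (h1.trans hd) (hA p q)
      _ = A p q * (⨆ j, V p j * V q j)
          + A p q * |(Matrix.of fun i j => maxMul U Uᵀ i j - maxMul V Vᵀ i j) p q| := by ring
      _ ≤ _ := add_le_add h3 h4
  have hsymm : matNorm (Matrix.of fun i j => maxMul Y Yᵀ i j - maxMul X Xᵀ i j)
      = matNorm (Matrix.of fun i j => maxMul X Xᵀ i j - maxMul Y Yᵀ i j) := by
    simp [matNorm, abs_sub_comm]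
  constructor
  · rw [abs_sub_le_iff]
    constructor
    · have := key X Y hX0 hY0; linarith
    · have := key Y X hY0 hX0; rw [hsymm] at this; linarith
  · rw [mul_assoc]
    refine mul_le_mul_of_nonneg_left ?_ hAnorm
    refine matNorm_le _ fun p q => ?_
    have e1 : (Matrix.of fun i j => maxMul X Xᵀ i j - maxMul Y Yᵀ i j) p q
        = (⨆ j, X p j * X q j) - (⨆ j, Y p j * Y q j) := by simp [maxMul]
    rw [e1]
    refine le_trans (abs_ciSup_sub _ _) (ciSup_le fun j => ?_)
    have e2 : X p j * X q j - Y p j * Y q j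
        = X p j * (X q j - Y q j) + (X p j - Y p j) * Y q j := by ring
    rw [e2]
    have b1 : |X p j| ≤ matNorm X := abs_le_matNorm X p j
    have b2 : |Y q j| ≤ matNorm Y := abs_le_matNorm Y q j
    have b3 : |X q j - Y q j| ≤ matNorm (Matrix.of fun i j => X i j - Y i j) := by
      simpa using abs_le_matNorm (Matrix.of fun i j => X i j - Y i j) q j
    have b4 : |X p j - Y p j| ≤ matNorm (Matrix.of fun i j => X i j - Y i j) := by
      simpa using abs_le_matNorm (Matrix.of fun i j => X i j - Y i j) p j
    calc |X p j * (X q j - Y q j) + (X p j - Y p j) * Y q j|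
        ≤ |X p j * (X q j - Y q j)| + |(X p j - Y p j) * Y q j| := abs_add_le _ _
      _ = |X p j| * |X q j - Y q j| + |X p j - Y p j| * |Y q j| := by
          rw [abs_mul, abs_mul]
      _ ≤ matNorm X * matNorm (Matrix.of fun i j => X i j - Y i j)
          + matNorm (Matrix.of fun i j => X i j - Y i j) * matNorm Y := by
          gcongr <;> first | exact abs_nonneg _ | exact matNorm_nonneg' _
      _ = (matNorm X + matNorm Y) * matNorm (Matrix.of fun i j => X i j - Y i j) := by ring
end

section
/- Let A ∈ M_n(ℝ₊) and 1 ≤ k < n. Then the max convex hull of the max k-geometric spectrum of A is contained in the max k-numerical range: conv⊗(σ_max^k(A)) ⊆ W_max^k(A). -/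
open Matrix

/-- Max-algebra powers of a square matrix (`A_⊗^0 = I`). -/
noncomputable def maxPow {n : ℕ} (A : Matrix (Fin n) (Fin n) ℝ) : ℕ → Matrix (Fin n) (Fin n) ℝ
  | 0 => 1
  | m + 1 => maxMul (maxPow A m) A

/-- Local spectral radius of `A` at `x`:
`r_x(A) = limsup_{m→∞} ‖A_⊗^m ⊗ x‖^{1/m}` with `‖y‖ = max_i |y_i|`. -/
noncomputable def rLoc {n : ℕ} (A : Matrix (Fin n) (Fin n) ℝ) (x : Fin n → ℝ) : ℝ :=
  Filter.limsup
    (fun m : ℕ => (⨆ i, |⨆ l, maxPow A m i l * x l|) ^ ((m : ℝ)⁻¹)) Filter.atTop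

/-- The max geometric eigenvalue `μ_j = r_{e_j}(A)`. -/
noncomputable def muGeom {n : ℕ} (A : Matrix (Fin n) (Fin n) ℝ) (j : Fin n) : ℝ :=
  rLoc A (fun l => if l = j then 1 else 0)

/-- The max `k`-geometric spectrum `σ_max^k(A) = { max_{j∈S} μ_j : |S| = k }`. -/
noncomputable def sigmaMaxK {n : ℕ} (k : ℕ) (A : Matrix (Fin n) (Fin n) ℝ) : Set ℝ :=
  {z | ∃ S : Finset (Fin n), S.card = k ∧ z = ⨆ j : {x : Fin n // x ∈ S}, muGeom A j.1}

/-- Max convex hull of a subset of `ℝ₊`. -/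
noncomputable def convMax (M : Set ℝ) : Set ℝ :=
  {z | ∃ (m : ℕ), 0 < m ∧ ∃ (x : Fin m → ℝ) (α : Fin m → ℝ),
    (∀ i, x i ∈ M) ∧ (∀ i, 0 ≤ α i) ∧ (⨆ i, α i) = 1 ∧ z = ⨆ i, α i * x i}


section Aux
open Filter

lemma fin_le_ciSup {ι : Type*} [Fintype ι] (f : ι → ℝ) (i : ι) : f i ≤ ⨆ i, f i :=
  le_ciSup (Set.Finite.bddAbove (Set.finite_range f)) i

lemma maxPow_nonneg {n : ℕ} {A : Matrix (Fin n) (Fin n) ℝ} (hA : ∀ i j, 0 ≤ A i j)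
    (m : ℕ) (i l : Fin n) : 0 ≤ maxPow A m i l := by
  induction m generalizing i l with
  | zero =>
    simp only [maxPow, Matrix.one_apply]
    split <;> norm_num
  | succ m ih =>
    by_cases hn : n = 0
    · exact absurd i.isLt (by omega)
    have : Nonempty (Fin n) := ⟨⟨0, by omega⟩⟩
    simp only [maxPow, maxMul, Matrix.of_apply]
    exact le_trans (mul_nonneg (ih i i) (hA i l)) (fin_le_ciSup (fun p => maxPow A m i p * A p l) i)

lemma maxPow_diag_lb {n : ℕ} {A : Matrix (Fin n) (Fin n) ℝ} (hA : ∀ i j, 0 ≤ A i j)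
    (j : Fin n) (m : ℕ) : A j j ^ m ≤ maxPow A m j j := by
  have : Nonempty (Fin n) := ⟨j⟩
  induction m with
  | zero => simp [maxPow, Matrix.one_apply]
  | succ m ih =>
    simp only [maxPow, maxMul, Matrix.of_apply]
    refine le_trans ?_ (fin_le_ciSup (fun p => maxPow A m j p * A p j) j)
    rw [pow_succ]
    exact mul_le_mul_of_nonneg_right ih (hA j j)

lemma maxPow_ub {n : ℕ} {A : Matrix (Fin n) (Fin n) ℝ} (hA : ∀ i j, 0 ≤ A i j)
    {B : ℝ} (hB : ∀ i l, A i l ≤ B) (m : ℕ) (hm : 1 ≤ m) (i l : Fin n) :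
    maxPow A m i l ≤ B ^ m := by
  have : Nonempty (Fin n) := ⟨i⟩
  have hB0 : 0 ≤ B := le_trans (hA i i) (hB i i)
  induction m generalizing i l with
  | zero => omega
  | succ m ih =>
    rcases Nat.eq_or_lt_of_le hm with h1 | h1
    · -- m = 0
      have hm0 : m = 0 := by omega
      subst hm0
      simp only [maxPow, maxMul, Matrix.of_apply]
      refine ciSup_le fun p => ?_
      simp only [Matrix.one_apply]
      split
      · simpa using le_trans (hB _ _) (by nlinarith)
      · simpa using (by nlinarith [hB i l, hA p l] : (0:ℝ) ≤ B ^ 1)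
    · have hm1 : 1 ≤ m := by omega
      simp only [maxPow, maxMul, Matrix.of_apply]
      refine ciSup_le fun p => ?_
      rw [pow_succ]
      exact mul_le_mul (ih hm1 i p) (hB p l) (hA p l) (by positivity)

-- the sequence defining muGeom, simplified
lemma muGeom_seq {n : ℕ} (A : Matrix (Fin n) (Fin n) ℝ) (hA : ∀ i j, 0 ≤ A i j) (j : Fin n) :
    muGeom A j = Filter.limsup
      (fun m : ℕ => (⨆ i, maxPow A m i j) ^ ((m : ℝ)⁻¹)) Filter.atTop := by
  have : Nonempty (Fin n) := ⟨j⟩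
  unfold muGeom rLoc
  congr 1
  funext m
  congr 1
  congr 1
  funext i
  have h1 : (⨆ l, maxPow A m i l * (if l = j then (1:ℝ) else 0)) = maxPow A m i j := by
    apply le_antisymm
    · refine ciSup_le fun l => ?_
      by_cases h : l = j
      · subst h; simp
      · simp [h, maxPow_nonneg hA]
    · have := fin_le_ciSup (fun l => maxPow A m i l * (if l = j then (1:ℝ) else 0)) j
      simpa using this
  rw [h1, abs_of_nonneg (maxPow_nonneg hA m i j)]

lemma rpow_pow_inv {x : ℝ} (hx : 0 ≤ x) {m : ℕ} (hm : 1 ≤ m) :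
    (x ^ m) ^ ((m : ℝ)⁻¹) = x := by
  rw [← Real.rpow_natCast x m, ← Real.rpow_mul hx]
  rw [mul_inv_cancel₀ (by positivity), Real.rpow_one]

lemma muGeom_bounds {n : ℕ} (A : Matrix (Fin n) (Fin n) ℝ) (hA : ∀ i j, 0 ≤ A i j)
    {B : ℝ} (hB : ∀ i l, A i l ≤ B) (j : Fin n) :
    A j j ≤ muGeom A j ∧ muGeom A j ≤ B := by
  have : Nonempty (Fin n) := ⟨j⟩
  have hB0 : 0 ≤ B := le_trans (hA j j) (hB j j)
  rw [muGeom_seq A hA j]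
  set u : ℕ → ℝ := fun m => (⨆ i, maxPow A m i j) ^ ((m : ℝ)⁻¹) with hu
  have hub : ∀ m, 1 ≤ m → u m ≤ B := by
    intro m hm
    have h1 : (⨆ i, maxPow A m i j) ≤ B ^ m := ciSup_le fun i => maxPow_ub hA hB m hm i j
    have h0 : (0:ℝ) ≤ ⨆ i, maxPow A m i j :=
      le_trans (maxPow_nonneg hA m j j) (fin_le_ciSup (fun i => maxPow A m i j) j)
    calc u m ≤ (B ^ m) ^ ((m:ℝ)⁻¹) := Real.rpow_le_rpow h0 h1 (by positivity)
      _ = B := rpow_pow_inv hB0 hm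
  have hlb : ∀ m, 1 ≤ m → A j j ≤ u m := by
    intro m hm
    have h1 : A j j ^ m ≤ ⨆ i, maxPow A m i j :=
      le_trans (maxPow_diag_lb hA j m) (fin_le_ciSup (fun i => maxPow A m i j) j)
    calc A j j = (A j j ^ m) ^ ((m:ℝ)⁻¹) := (rpow_pow_inv (hA j j) hm).symm
      _ ≤ u m := Real.rpow_le_rpow (pow_nonneg (hA j j) m) h1 (by positivity)

  have hbdd : Filter.IsBoundedUnder (· ≤ ·) Filter.atTop u :=
    ⟨B ⊔ 1, by
      refine Filter.eventually_map.mpr ?_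
      filter_upwards [Filter.eventually_ge_atTop 1] with m hm
      exact le_trans (hub m hm) le_sup_left⟩
  constructor
  · refine Filter.le_limsup_of_frequently_le ?_ hbdd
    refine (Filter.eventually_atTop.mpr ⟨1, fun m hm => hlb m hm⟩).frequently
  · refine Filter.limsup_le_of_le ?_ ?_
    · exact Filter.isCoboundedUnder_le_of_eventually_le Filter.atTop
        (Filter.eventually_atTop.mpr ⟨1, fun m hm => hlb m hm⟩)
    · exact Filter.eventually_atTop.mpr ⟨1, fun m hm => hub m hm⟩

lemma ciSup_mul_le' {ι : Type*} [Fintype ι] [Nonempty ι] {f : ι → ℝ} {c z : ℝ}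
    (hc : 0 ≤ c) (hz : 0 ≤ z) (h : ∀ i, f i * c ≤ z) : (⨆ i, f i) * c ≤ z := by
  rcases eq_or_lt_of_le hc with h0 | h0
  · simp [← h0, hz]
  · rw [← le_div_iff₀ h0]
    exact ciSup_le fun i => (le_div_iff₀ h0).mpr (h i)

lemma trMax_le {n k : ℕ} [Nonempty (Fin n)] [Nonempty (Fin k)]
    (A : Matrix (Fin n) (Fin n) ℝ) (X : Matrix (Fin n) (Fin k) ℝ) {z : ℝ} (hz : 0 ≤ z)
    (hX : ∀ i s, 0 ≤ X i s) (h : ∀ s i i', X i s * A i i' * X i' s ≤ z) :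
    trMax (maxMul (maxMul Xᵀ A) X) ≤ z := by
  unfold trMax maxMul
  simp only [Matrix.of_apply, Matrix.transpose_apply]
  refine ciSup_le fun s => ciSup_le fun i' => ?_
  exact ciSup_mul_le' (hX i' s) hz fun i => h s i i'

lemma le_trMax {n k : ℕ} [Nonempty (Fin n)] [Nonempty (Fin k)]
    (A : Matrix (Fin n) (Fin n) ℝ) (X : Matrix (Fin n) (Fin k) ℝ)
    (hX : ∀ i s, 0 ≤ X i s) (s : Fin k) (i i' : Fin n) :
    X i s * A i i' * X i' s ≤ trMax (maxMul (maxMul Xᵀ A) X) := by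
  unfold trMax maxMul
  simp only [Matrix.of_apply, Matrix.transpose_apply]
  refine le_trans ?_ (fin_le_ciSup (fun s => ⨆ p, (⨆ p', X p' s * A p' p) * X p s) s)
  refine le_trans ?_ (fin_le_ciSup (fun p => (⨆ p', X p' s * A p' p) * X p s) i')
  exact mul_le_mul_of_nonneg_right (fin_le_ciSup (fun p' => X p' s * A p' i') i) (hX i' s)

lemma continuous_fin_iSup {ι : Type*} [Fintype ι] [Nonempty ι] {f : ι → ℝ → ℝ}
    (hf : ∀ i, Continuous (f i)) : Continuous (fun t => ⨆ i, f i t) := by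
  have h1 : (fun t => ⨆ i, f i t)
      = fun t => Finset.univ.sup' Finset.univ_nonempty (fun i => f i t) := by
    funext t
    rw [Finset.sup'_univ_eq_ciSup]
  rw [h1]
  exact Continuous.finset_sup'_apply Finset.univ_nonempty fun i _ => hf i

noncomputable def phi (u : ℝ) : ℝ := max 0 (min 1 u)

lemma phi_nonneg (u : ℝ) : 0 ≤ phi u := le_max_left _ _
lemma phi_le_one (u : ℝ) : phi u ≤ 1 := max_le zero_le_one (min_le_left _ _)
lemma phi_eq_one {u : ℝ} (h : 1 ≤ u) : phi u = 1 := by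
  simp [phi, min_eq_left h]
lemma phi_eq_zero {u : ℝ} (h : u ≤ 0) : phi u = 0 := by
  have : min 1 u ≤ 0 := le_trans (min_le_right _ _) h
  simp [phi, max_eq_left this]
lemma phi_continuous : Continuous phi := by
  unfold phi; fun_prop
lemma phi_or (t : ℝ) : phi (3*t-2) = 0 ∨ phi (2-3*t) = 0 := by
  rcases le_total t (2/3) with h | h
  · exact Or.inl (phi_eq_zero (by linarith))
  · exact Or.inr (phi_eq_zero (by linarith))

noncomputable def Xpath {n k : ℕ} (jf : Fin k → Fin n)
    (p q c f : Fin n) (t : ℝ) : Matrix (Fin n) (Fin k) ℝ :=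
  Matrix.of fun i s =>
    if jf s = q ∧ q ≠ c then (if i = q then phi (2-3*t) else if i = f then phi (3*t) else 0)
    else if jf s = c then (if i = c then 1 else if i = p ∨ i = q then phi (3*t-2) else 0)
    else if i = jf s then 1 else 0

section XpathLemmas

variable {n k : ℕ} (jf : Fin k → Fin n) (p q c f : Fin n)
variable (Hinj : Function.Injective jf)
variable (Hf : ∀ s, jf s ≠ f)
variable (H3 : ∀ s, jf s = p → c = p)
variable (Hq : ∀ s, jf s = q → q ≠ c → c = p)

lemma Xpath_nonneg (t : ℝ) (i : Fin n) (s : Fin k) : 0 ≤ Xpath jf p q c f t i s := by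
  simp only [Xpath, Matrix.of_apply]
  split_ifs <;> first | exact phi_nonneg _ | norm_num

lemma Xpath_le_one (t : ℝ) (i : Fin n) (s : Fin k) : Xpath jf p q c f t i s ≤ 1 := by
  simp only [Xpath, Matrix.of_apply]
  split_ifs <;> first | exact phi_le_one _ | norm_num

include Hinj Hf H3 Hq in
lemma Xpath_prod_zero (t : ℝ) {s s' : Fin k} (hss : s ≠ s') (i : Fin n) :
    Xpath jf p q c f t i s * Xpath jf p q c f t i s' = 0 := by
  have hjj : jf s ≠ jf s' := fun h => hss (Hinj h)
  have key23 : ∀ (a b : Fin k), jf a ≠ jf b → ¬(jf a = q ∧ q ≠ c) → ¬(jf b = q ∧ q ≠ c) →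
      Xpath jf p q c f t i a * Xpath jf p q c f t i b = 0 := by
    intro a b hab ha hb
    simp only [Xpath, Matrix.of_apply]
    rw [if_neg ha, if_neg hb]
    by_cases hac : jf a = c <;> by_cases hbc : jf b = c
    · exact absurd (hac.trans hbc.symm) hab
    · rw [if_pos hac, if_neg hbc]
      rcases eq_or_ne i (jf b) with hib | hib
      · subst hib
        rw [if_pos rfl]
        have h1 : jf b ≠ c := hbc
        have h2 : jf b ≠ p := fun h => hbc ((H3 b h).symm ▸ h)
        have h3 : jf b ≠ q := by
          intro h
          rcases eq_or_ne q c with hqc | hqc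
          · exact hbc (h.trans hqc)
          · exact hb ⟨h, hqc⟩
        rw [if_neg h1, if_neg (by simp [h2, h3] : ¬(jf b = p ∨ jf b = q))]
        ring
      · rw [if_neg hib]; ring
    · rw [if_neg hac, if_pos hbc]
      rcases eq_or_ne i (jf a) with hia | hia
      · subst hia
        rw [if_pos rfl]
        have h1 : jf a ≠ c := hac
        have h2 : jf a ≠ p := fun h => hac ((H3 a h).symm ▸ h)
        have h3 : jf a ≠ q := by
          intro h
          rcases eq_or_ne q c with hqc | hqc
          · exact hac (h.trans hqc)
          · exact ha ⟨h, hqc⟩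
        rw [if_neg h1, if_neg (by simp [h2, h3] : ¬(jf a = p ∨ jf a = q))]
        ring
      · rw [if_neg hia]; ring
    · rw [if_neg hac, if_neg hbc]
      rcases eq_or_ne i (jf a) with hia | hia
      · subst hia
        rw [if_pos rfl, if_neg (fun h : (jf a : Fin n) = jf b => hab h)]
        ring
      · rw [if_neg hia]; ring
  have key1 : ∀ (a b : Fin k), jf a ≠ jf b → ¬(jf a = q ∧ q ≠ c) → (jf b = q ∧ q ≠ c) →
      Xpath jf p q c f t i a * Xpath jf p q c f t i b = 0 := by
    intro a b hab ha hb
    have hcp : c = p := Hq b hb.1 hb.2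
    simp only [Xpath, Matrix.of_apply]
    rw [if_neg ha, if_pos hb]
    by_cases hac : jf a = c
    · rw [if_pos hac]
      rcases eq_or_ne i q with hiq | hiq
      · have hqc : i ≠ c := hiq ▸ hb.2
        rw [if_pos hiq, if_neg hqc, if_pos (Or.inr hiq)]
        rcases phi_or t with h | h
        · rw [h]; ring
        · rw [h]; ring
      · rw [if_neg hiq]
        rcases eq_or_ne i f with hif | hif
        · have h1 : i ≠ c := fun h => Hf a (hac.trans (h.symm.trans hif))
          have h2 : i ≠ p := fun h => h1 (h.trans hcp.symm)
          rw [if_pos hif, if_neg h1, if_neg (by simp [h2, hiq] : ¬(i = p ∨ i = q))]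
          ring
        · rw [if_neg hif]; ring
    · rw [if_neg hac]
      rcases eq_or_ne i (jf a) with hia | hia
      · subst hia
        have h1 : jf a ≠ q := fun h => hab (h.trans hb.1.symm)
        have h2 : jf a ≠ f := Hf a
        rw [if_pos rfl, if_neg h1, if_neg h2]
        ring
      · rw [if_neg hia]; ring
  by_cases h1 : jf s = q ∧ q ≠ c <;> by_cases h2 : jf s' = q ∧ q ≠ c
  · exact absurd (h1.1.trans h2.1.symm) hjj
  · rw [mul_comm]; exact key1 s' s hjj.symm h2 h1
  · exact key1 s s' hjj h1 h2
  · exact key23 s s' hjj h1 h2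

include Hinj Hf H3 Hq in
lemma Xpath_orth (t : ℝ) : maxMul (Xpath jf p q c f t)ᵀ (Xpath jf p q c f t) = 1 := by
  have hn : Nonempty (Fin n) := ⟨p⟩
  ext s s'
  simp only [maxMul, Matrix.of_apply, Matrix.transpose_apply, Matrix.one_apply]
  rcases eq_or_ne s s' with rfl | hss
  · rw [if_pos rfl]
    apply le_antisymm
    · exact ciSup_le fun i =>
        mul_le_one₀ (Xpath_le_one jf p q c f t i s) (Xpath_nonneg jf p q c f t i s)
          (Xpath_le_one jf p q c f t i s)
    · have hex : ∃ i, Xpath jf p q c f t i s * Xpath jf p q c f t i s = 1 := by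
        by_cases hb1 : jf s = q ∧ q ≠ c
        · rcases le_total (3*t) 1 with h | h
          · refine ⟨q, ?_⟩
            simp only [Xpath, Matrix.of_apply]
            rw [if_pos hb1]
            simp [phi_eq_one (show (1:ℝ) ≤ 2-3*t by linarith)]
          · refine ⟨f, ?_⟩
            have hfq : f ≠ q := fun h => Hf s (hb1.1.trans h.symm)
            simp only [Xpath, Matrix.of_apply]
            rw [if_pos hb1]
            simp [hfq, phi_eq_one (show (1:ℝ) ≤ 3*t by linarith)]
        · by_cases hb2 : jf s = c
          · refine ⟨c, ?_⟩
            simp only [Xpath, Matrix.of_apply]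
            rw [if_neg hb1, if_pos hb2]
            simp
          · refine ⟨jf s, ?_⟩
            simp only [Xpath, Matrix.of_apply]
            rw [if_neg hb1, if_neg hb2]
            simp
      obtain ⟨i, hi⟩ := hex
      calc (1:ℝ) = Xpath jf p q c f t i s * Xpath jf p q c f t i s := hi.symm
        _ ≤ _ := fin_le_ciSup (fun i => Xpath jf p q c f t i s * Xpath jf p q c f t i s) i
  · rw [if_neg hss]
    have hz : ∀ i, Xpath jf p q c f t i s * Xpath jf p q c f t i s' = 0 :=
      Xpath_prod_zero jf p q c f Hinj Hf H3 Hq t hss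
    calc (⨆ i, Xpath jf p q c f t i s * Xpath jf p q c f t i s') = ⨆ _ : Fin n, (0:ℝ) := by
          simp only [hz]
      _ = 0 := ciSup_const

lemma Xpath_zero (i : Fin n) (s : Fin k) :
    Xpath jf p q c f 0 i s = if i = jf s then 1 else 0 := by
  simp only [Xpath, Matrix.of_apply]
  by_cases h1 : jf s = q ∧ q ≠ c
  · rw [if_pos h1]
    rcases eq_or_ne i q with hiq | hiq
    · rw [if_pos hiq, if_pos (hiq.trans h1.1.symm), phi_eq_one (by norm_num)]
    · rw [if_neg hiq, if_neg (fun h => hiq (h.trans h1.1) : ¬ i = jf s)]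
      rcases eq_or_ne i f with hif | hif
      · rw [if_pos hif, phi_eq_zero (by norm_num)]
      · rw [if_neg hif]
  · rw [if_neg h1]
    by_cases h2 : jf s = c
    · rw [if_pos h2]
      rcases eq_or_ne i c with hic | hic
      · rw [if_pos hic, if_pos (hic.trans h2.symm)]
      · rw [if_neg hic, if_neg (fun h => hic (h.trans h2) : ¬ i = jf s)]
        split_ifs with h3
        · exact phi_eq_zero (by norm_num)
        · rfl
    · rw [if_neg h2]

lemma Xpath_one_p (s : Fin k) (hs : jf s = c) (hqc : ¬(jf s = q ∧ q ≠ c)) :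
    Xpath jf p q c f 1 p s = 1 := by
  have h1 : phi (3*1-2) = 1 := phi_eq_one (by norm_num)
  simp only [Xpath, Matrix.of_apply]
  rw [if_neg hqc, if_pos hs]
  rcases eq_or_ne p c with hpc | hpc
  · rw [if_pos hpc]
  · rw [if_neg hpc]
    simp [phi_eq_one (show (1:ℝ) ≤ 3-2 by norm_num)]

lemma Xpath_one_q (s : Fin k) (hs : jf s = c) (hqc : ¬(jf s = q ∧ q ≠ c)) :
    Xpath jf p q c f 1 q s = 1 := by
  have h1 : phi (3*1-2) = 1 := phi_eq_one (by norm_num)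
  simp only [Xpath, Matrix.of_apply]
  rw [if_neg hqc, if_pos hs]
  rcases eq_or_ne q c with hqc' | hqc'
  · rw [if_pos hqc']
  · rw [if_neg hqc']
    simp [phi_eq_one (show (1:ℝ) ≤ 3-2 by norm_num)]

lemma Xpath_cont (i : Fin n) (s : Fin k) : Continuous (fun t => Xpath jf p q c f t i s) := by
  simp only [Xpath, Matrix.of_apply]
  split_ifs <;>
    first
      | exact continuous_const
      | exact phi_continuous.comp (by fun_prop)

end XpathLemmas

end Aux

/-- For nonnegative `A ∈ M_n(ℝ₊)` and `1 ≤ k < n`: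
`conv⊗(σ_max^k(A)) ⊆ W_max^k(A)`. -/


theorem stmt_16 {n k : ℕ} (hk : 1 ≤ k) (hkn : k < n)
    (A : Matrix (Fin n) (Fin n) ℝ) (hA : ∀ i j, 0 ≤ A i j) :
    convMax (sigmaMaxK k A) ⊆ Wmax k A := by
  have hn : 0 < n := by omega
  have instn : Nonempty (Fin n) := ⟨⟨0, hn⟩⟩
  have instk : Nonempty (Fin k) := ⟨⟨0, hk⟩⟩
  intro z hz
  obtain ⟨m, hm, x, α, hxM, hα0, hαsup, hzx⟩ := hz
  have instm : Nonempty (Fin m) := ⟨⟨0, hm⟩⟩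
  -- maximal entry of A
  obtain ⟨⟨p, q⟩, hpq⟩ := Finite.exists_max (fun ij : Fin n × Fin n => A ij.1 ij.2)
  have hApq : ∀ i l, A i l ≤ A p q := fun i l => hpq (i, l)
  -- maximizers
  obtain ⟨istar, histar⟩ := Finite.exists_max (fun i => α i * x i)
  obtain ⟨i0, hi0⟩ := Finite.exists_max α
  have hαi0 : α i0 = 1 := by
    rw [← hαsup]
    exact le_antisymm (fin_le_ciSup α i0) (ciSup_le hi0)
  have hzval : z = α istar * x istar := by
    rw [hzx]
    exact le_antisymm (ciSup_le histar) (fin_le_ciSup (fun i => α i * x i) istar)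
  -- upper bound for z
  obtain ⟨S', hS'card, hxis⟩ := hxM istar
  have hS'non : S'.Nonempty := Finset.card_pos.mp (by omega)
  obtain ⟨j0, hj0⟩ := hS'non
  have instS' : Nonempty {y : Fin n // y ∈ S'} := ⟨⟨j0, hj0⟩⟩
  have hxis_nn : 0 ≤ x istar := by
    rw [hxis]
    refine le_trans (le_trans (hA j0 j0) (muGeom_bounds A hA hApq j0).1) ?_
    exact fin_le_ciSup (fun j : {y : Fin n // y ∈ S'} => muGeom A j.1) ⟨j0, hj0⟩
  have hxis_ub : x istar ≤ A p q := by
    rw [hxis]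
    exact ciSup_le fun j => (muGeom_bounds A hA hApq j.1).2
  have hαle : α istar ≤ 1 := by rw [← hαsup]; exact fin_le_ciSup α istar
  have hzApq : z ≤ A p q := by
    rw [hzval]
    calc α istar * x istar ≤ 1 * x istar := mul_le_mul_of_nonneg_right hαle hxis_nn
      _ = x istar := one_mul _
      _ ≤ A p q := hxis_ub
  have hz0 : 0 ≤ z := by rw [hzval]; exact mul_nonneg (hα0 istar) hxis_nn
  -- lower-bound set S (from i0)
  obtain ⟨S, hScard, hxi0⟩ := hxM i0
  have hSnon : S.Nonempty := Finset.card_pos.mp (by omega)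
  obtain ⟨js0, hjs0⟩ := hSnon
  have instS : Nonempty {y : Fin n // y ∈ S} := ⟨⟨js0, hjs0⟩⟩
  have hzS : ∀ jj ∈ S, A jj jj ≤ z := by
    intro jj hjj
    have h1 : A jj jj ≤ muGeom A jj := (muGeom_bounds A hA hApq jj).1
    have h2 : muGeom A jj ≤ ⨆ j : {y : Fin n // y ∈ S}, muGeom A j.1 :=
      fin_le_ciSup (fun j : {y : Fin n // y ∈ S} => muGeom A j.1) ⟨jj, hjj⟩
    have h5 : α i0 * x i0 ≤ z := by
      rw [hzx]; exact fin_le_ciSup (fun i => α i * x i) i0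
    rw [hαi0, one_mul, hxi0] at h5
    linarith
  -- enumeration of S
  let e := S.equivFin
  let jf : Fin k → Fin n := fun s => (e.symm (Fin.cast hScard.symm s) : Fin n)
  have hjfS : ∀ s, jf s ∈ S := fun s => (e.symm (Fin.cast hScard.symm s)).2
  have hjinj : Function.Injective jf := by
    intro s s' h
    have h2 : e.symm (Fin.cast hScard.symm s) = e.symm (Fin.cast hScard.symm s') :=
      Subtype.ext h
    have h3 := e.symm.injective h2
    have h4 := congrArg Fin.val h3
    simp only [Fin.coe_cast] at h4
    exact Fin.ext h4
  have hjsurj : ∀ i ∈ S, ∃ s, jf s = i := by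
    intro i hi
    refine ⟨Fin.cast hScard (e ⟨i, hi⟩), ?_⟩
    simp only [jf]
    have : Fin.cast hScard.symm (Fin.cast hScard (e ⟨i, hi⟩)) = e ⟨i, hi⟩ := by
      ext; simp
    rw [this, Equiv.symm_apply_apply]
  -- a free coordinate
  obtain ⟨fr, hfr⟩ : ∃ fr, fr ∉ S := by
    by_contra h
    push_neg at h
    have h2 : (Finset.univ : Finset (Fin n)) ⊆ S := fun y _ => h y
    have h3 := Finset.card_le_card h2
    rw [Finset.card_univ, Fintype.card_fin, hScard] at h3
    omega
  have Hf' : ∀ s, jf s ≠ fr := fun s h => hfr (h ▸ hjfS s)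
  -- the carrier coordinate
  set c : Fin n := if p ∈ S then p else if q ∈ S then q else jf ⟨0, hk⟩ with hcdef
  have hcS : c ∈ S := by
    rw [hcdef]
    split_ifs with h1 h2
    · exact h1
    · exact h2
    · exact hjfS _
  have H3' : ∀ s, jf s = p → c = p := by
    intro s h
    rw [hcdef, if_pos (h ▸ hjfS s)]
  have Hq' : ∀ s, jf s = q → q ≠ c → c = p := by
    intro s h hqc
    by_cases hp : p ∈ S
    · rw [hcdef, if_pos hp]
    · exfalso
      apply hqc
      have hcq : c = q := by rw [hcdef, if_neg hp, if_pos (h ▸ hjfS s)]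
      exact hcq.symm
  -- the path
  set X := Xpath jf p q c fr with hXdef
  have hXnn : ∀ (t : ℝ) i s, 0 ≤ X t i s := fun t i s => Xpath_nonneg jf p q c fr t i s
  have horth : ∀ t : ℝ, maxMul (X t)ᵀ (X t) = 1 :=
    fun t => Xpath_orth jf p q c fr hjinj Hf' H3' Hq' t
  set F : ℝ → ℝ := fun t => trMax (maxMul (maxMul (X t)ᵀ A) (X t)) with hFdef
  have hF0 : F 0 ≤ z := by
    apply trMax_le A (X 0) hz0 (fun i s => hXnn 0 i s)
    intro s i i'
    rw [hXdef, Xpath_zero jf p q c fr i s, Xpath_zero jf p q c fr i' s]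
    by_cases hi : i = jf s <;> by_cases hi' : i' = jf s
    · rw [if_pos hi, if_pos hi', hi, hi', one_mul, mul_one]
      exact hzS _ (hjfS s)
    · rw [if_neg hi', mul_zero]; exact hz0
    · rw [if_neg hi, zero_mul, zero_mul]; exact hz0
    · rw [if_neg hi, zero_mul, zero_mul]; exact hz0
  have hF1 : z ≤ F 1 := by
    obtain ⟨sc, hsc⟩ := hjsurj c hcS
    have hb1 : ¬(jf sc = q ∧ q ≠ c) := by
      rintro ⟨h1, h2⟩
      exact h2 (h1.symm.trans hsc)
    calc z ≤ A p q := hzApq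
      _ = X 1 p sc * A p q * X 1 q sc := by
          rw [hXdef, Xpath_one_p jf p q c fr sc hsc hb1, Xpath_one_q jf p q c fr sc hsc hb1]
          ring
      _ ≤ F 1 := le_trMax A (X 1) (fun i s => hXnn 1 i s) sc p q
  have hFc : Continuous F := by
    have hFeq : F = fun t => ⨆ s : Fin k, ⨆ i' : Fin n, (⨆ i : Fin n, X t i s * A i i') * X t i' s := by
      funext t
      rw [hFdef]
      simp only [trMax, maxMul, Matrix.of_apply, Matrix.transpose_apply]
    rw [hFeq]
    apply continuous_fin_iSup
    intro s
    apply continuous_fin_iSup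
    intro i'
    refine Continuous.mul ?_ (Xpath_cont jf p q c fr i' s)
    apply continuous_fin_iSup
    intro i
    exact (Xpath_cont jf p q c fr i s).mul continuous_const
  obtain ⟨t, _, hFt⟩ := intermediate_value_Icc (by norm_num : (0:ℝ) ≤ 1)
    hFc.continuousOn ⟨hF0, hF1⟩
  exact ⟨X t, ⟨fun i s => hXnn t i s, horth t⟩, hFt.symm⟩
end

section
/- Let A = (a_{ij}) ∈ M_n(ℝ₊) with a_{11} ≤ a_{22} ≤ ⋯ ≤ a_{nn}, and let 0 ≤ i < n be an integer. Then δ_{i+1}(A) ≥ δ_i(A) · a_{n−i, n−i}, where δ_0(A) = 1 and for 1 ≤ k ≤ n, δ_k(A) is the maximum of the max permanents of all k×k principal submatrices of A. -/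
open Matrix

/-- Max permanent of the principal submatrix of `A` on a subset `S`. -/
noncomputable def maxPermSub {n : ℕ} (A : Matrix (Fin n) (Fin n) ℝ)
    (S : Finset (Fin n)) : ℝ :=
  ⨆ σ : Equiv.Perm {x : Fin n // x ∈ S}, ∏ i : {x : Fin n // x ∈ S}, A i.1 (σ i).1

/-- Coefficient `δ_k(A)` of the characteristic maxpolynomial: `δ_0 = 1` and for
`1 ≤ k ≤ n`, `δ_k = max of the max permanents of all k×k principal submatrices`. -/
noncomputable def delta {n : ℕ} (A : Matrix (Fin n) (Fin n) ℝ) (k : ℕ) : ℝ :=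
  if k = 0 then 1
  else ⨆ S : {S : Finset (Fin n) // S.card = k}, maxPermSub A S.1

/-!
Take an `i`-subset `S` and a permutation of `S` realising `δ_i(A)`. Only `i` indices lie in `S`,
so one of the `i + 1` indices `j ≥ n - i` is missing from it; extending the permutation by the
fixed point `j` gives an `(i + 1)`-subset whose max permanent is at least
`δ_i(A) · a_jj ≥ δ_i(A) · a_{n-i,n-i}`.
-/

section MaxPermanent

variable {n : ℕ} (A : Matrix (Fin n) (Fin n) ℝ)

lemma prod_le_maxPermSub (S : Finset (Fin n)) (σ : Equiv.Perm {x : Fin n // x ∈ S}) :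
    ∏ i : {x : Fin n // x ∈ S}, A i.1 (σ i).1 ≤ maxPermSub A S :=
  le_ciSup (f := fun σ : Equiv.Perm {x : Fin n // x ∈ S} => ∏ i, A i.1 (σ i).1)
    (Set.finite_range _).bddAbove σ

lemma exists_maxPermSub_eq_prod (S : Finset (Fin n)) :
    ∃ σ : Equiv.Perm {x : Fin n // x ∈ S}, maxPermSub A S = ∏ i, A i.1 (σ i).1 := by
  obtain ⟨σ, hσ⟩ := exists_eq_ciSup_of_finite
    (f := fun σ : Equiv.Perm {x : Fin n // x ∈ S} => ∏ i, A i.1 (σ i).1)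
  exact ⟨σ, hσ.symm⟩

lemma maxPermSub_nonneg (hA : ∀ i j, 0 ≤ A i j) (S : Finset (Fin n)) : 0 ≤ maxPermSub A S :=
  Real.iSup_nonneg fun _ => Finset.prod_nonneg fun _ _ => hA _ _

@[simp]
lemma maxPermSub_empty : maxPermSub A ∅ = 1 := by
  simp [maxPermSub]

lemma prod_ofSubtype_apply (S : Finset (Fin n)) (σ : Equiv.Perm {x : Fin n // x ∈ S}) :
    ∏ x ∈ S, A x (Equiv.Perm.ofSubtype σ x) = ∏ i : {x : Fin n // x ∈ S}, A i.1 (σ i).1 := by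
  rw [← Finset.prod_coe_sort]
  exact Finset.prod_congr rfl fun i _ => by rw [Equiv.Perm.ofSubtype_apply_coe]

lemma maxPermSub_mul_le_maxPermSub_insert (S : Finset (Fin n)) {j : Fin n} (hj : j ∉ S) :
    maxPermSub A S * A j j ≤ maxPermSub A (insert j S) := by
  obtain ⟨σ, hσ⟩ := exists_maxPermSub_eq_prod A S
  set τ : Equiv.Perm (Fin n) := Equiv.Perm.ofSubtype σ
  have hτj : τ j = j := Equiv.Perm.ofSubtype_apply_of_not_mem σ hj
  have hτ : ∀ x, τ x ∈ insert j S ↔ x ∈ insert j S := by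
    intro x
    by_cases hx : x ∈ S
    · simp [τ, Equiv.Perm.ofSubtype_apply_of_mem σ hx, hx]
    · rw [Equiv.Perm.ofSubtype_apply_of_not_mem σ hx]
  calc maxPermSub A S * A j j = ∏ x ∈ insert j S, A x (τ x) := by
        rw [Finset.prod_insert hj, hτj, prod_ofSubtype_apply, hσ, mul_comm]
    _ = ∏ i : {x : Fin n // x ∈ insert j S}, A i.1 (τ.subtypePerm hτ i).1 :=
        (Finset.prod_coe_sort _ _).symm
    _ ≤ maxPermSub A (insert j S) := prod_le_maxPermSub A _ _

lemma maxPermSub_le_delta (S : Finset (Fin n)) : maxPermSub A S ≤ delta A S.card := by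
  rcases S.eq_empty_or_nonempty with rfl | hS
  · simp [delta]
  · rw [delta, if_neg hS.card_ne_zero]
    exact le_ciSup (f := fun T : {T : Finset (Fin n) // T.card = S.card} => maxPermSub A T.1)
      (Set.finite_range _).bddAbove ⟨S, rfl⟩

lemma exists_delta_eq_maxPermSub {k : ℕ} (hk : k ≤ n) :
    ∃ S : Finset (Fin n), S.card = k ∧ delta A k = maxPermSub A S := by
  rcases Nat.eq_zero_or_pos k with rfl | hk0
  · exact ⟨∅, rfl, by simp [delta]⟩
  · have : Nonempty {S : Finset (Fin n) // S.card = k} := by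
      obtain ⟨S, -, hS⟩ := Finset.exists_subset_card_eq
        (s := (Finset.univ : Finset (Fin n))) (by simpa using hk)
      exact ⟨⟨S, hS⟩⟩
    obtain ⟨S, hS⟩ := exists_eq_ciSup_of_finite
      (f := fun S : {S : Finset (Fin n) // S.card = k} => maxPermSub A S.1)
    exact ⟨S.1, S.2, by rw [delta, if_neg hk0.ne', ← hS]⟩

end MaxPermanent

lemma Fin.exists_le_notMem_of_card_lt {n : ℕ} (S : Finset (Fin n)) (a : Fin n)
    (h : S.card < n - a) : ∃ j ∉ S, a ≤ j := by
  have : ¬ Finset.Ici a ⊆ S := fun hsub =>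
    (Finset.card_le_card hsub).not_gt (by rwa [Fin.card_Ici])
  obtain ⟨j, hj, hjS⟩ := Finset.not_subset.mp this
  exact ⟨j, hjS, Finset.mem_Ici.mp hj⟩

/-- Let `A ∈ M_n(ℝ₊)` with nondecreasing diagonal
`a_{11} ≤ ⋯ ≤ a_{nn}` and let `0 ≤ i < n`. Then `δ_{i+1}(A) ≥ δ_i(A) · a_{n−i,n−i}`
(1-based indexing; `a_{n−i,n−i}` is the `(n−1−i)`-th diagonal entry 0-based). -/
theorem stmt_17 {n : ℕ} (A : Matrix (Fin n) (Fin n) ℝ)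
    (hA : ∀ i j, 0 ≤ A i j)
    (hdiag : ∀ i j : Fin n, i ≤ j → A i i ≤ A j j)
    (i : ℕ) (hi : i < n) :
    delta A i * A ⟨n - 1 - i, by omega⟩ ⟨n - 1 - i, by omega⟩ ≤ delta A (i + 1) := by
  set a : Fin n := ⟨n - 1 - i, by omega⟩
  obtain ⟨S, hS, hδ⟩ := exists_delta_eq_maxPermSub A hi.le
  obtain ⟨j, hjS, haj⟩ := Fin.exists_le_notMem_of_card_lt S a (by simp only [a]; omega)
  calc delta A i * A a a ≤ maxPermSub A S * A j j := by
        rw [hδ]; exact mul_le_mul_of_nonneg_left (hdiag a j haj) (maxPermSub_nonneg A hA S)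
    _ ≤ maxPermSub A (insert j S) := maxPermSub_mul_le_maxPermSub_insert A S hjS
    _ ≤ delta A (insert j S).card := maxPermSub_le_delta A _
    _ = delta A (i + 1) := by rw [Finset.card_insert_of_notMem hjS, hS]
end

section
/- Let A = (a_{ij}) ∈ M_n(ℝ₊) and c = (c_1, …, c_n) ∈ ℝ₊ⁿ. Then the max c-numerical range of A equals W_max^c(A) = { max_{1≤i≤n} c_i a_{σ(i)σ(i)} : σ a permutation of {1,…,n} }. In particular, if c_1 = ⋯ = c_n or a_{11} = ⋯ = a_{nn}, then W_max^c(A) is a singleton. -/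
open Matrix

/-- The group `𝒰_n` of max-unitary matrices: nonnegative `U` with
`Uᵀ⊗U = U⊗Uᵀ = I_n` (exactly the permutation matrices). -/
def Uset (n : ℕ) : Set (Matrix (Fin n) (Fin n) ℝ) :=
  {U | (∀ i j, 0 ≤ U i j) ∧ maxMul Uᵀ U = 1 ∧ maxMul U Uᵀ = 1}

/-- The max `c`-numerical range
`W_max^c(A) = { max_i c_i ((x^{(i)})ᵀ⊗A⊗x^{(i)}) : X ∈ 𝒰_n }`, where `x^{(i)}` is the
`i`-th column of `X` and `(x)ᵀ⊗A⊗x = max_{p,q} x_p x_q a_{pq}`. -/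
noncomputable def WmaxC {n : ℕ} (c : Fin n → ℝ) (A : Matrix (Fin n) (Fin n) ℝ) : Set ℝ :=
  {z | ∃ X ∈ Uset n, z = ⨆ i, c i * ⨆ p, ⨆ q, X p i * X q i * A p q}

private lemma bddR {n : ℕ} (f : Fin n → ℝ) : BddAbove (Set.range f) :=
  Set.Finite.bddAbove (Set.finite_range f)

private lemma iSup_single {n : ℕ} [Nonempty (Fin n)] (f : Fin n → ℝ) (i0 : Fin n)
    (h0 : ∀ p, p ≠ i0 → f p = 0) (h1 : 0 ≤ f i0) : (⨆ p, f p) = f i0 := by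
  apply le_antisymm
  · refine ciSup_le fun p => ?_
    by_cases h : p = i0
    · exact h ▸ le_refl _
    · rw [h0 p h]; exact h1
  · exact le_ciSup (bddR f) i0

private lemma iSup_zero {n : ℕ} (f : Fin n → ℝ) (hz : (⨆ p, f p) = 0)
    (hpos : ∀ p, 0 ≤ f p) : ∀ p, f p = 0 :=
  fun p => le_antisymm (hz ▸ le_ciSup (bddR f) p) (hpos p)

private lemma quad_eval {n : ℕ} (hn : 0 < n) (A : Matrix (Fin n) (Fin n) ℝ)
    (hA : ∀ i j, 0 ≤ A i j) (X : Matrix (Fin n) (Fin n) ℝ) (σ0 : Fin n → Fin n)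
    (hX : ∀ p i, X p i = if p = σ0 i then 1 else 0) (i : Fin n) :
    (⨆ p, ⨆ q, X p i * X q i * A p q) = A (σ0 i) (σ0 i) := by
  haveI : Nonempty (Fin n) := ⟨⟨0, hn⟩⟩
  have inner : ∀ p, (⨆ q, X p i * X q i * A p q)
      = if p = σ0 i then A (σ0 i) (σ0 i) else 0 := by
    intro p
    by_cases hp : p = σ0 i
    · subst hp
      rw [if_pos rfl]
      have h := iSup_single (fun q => X (σ0 i) i * X q i * A (σ0 i) q) (σ0 i)
        (fun q hq => by simp [hX, hq])
        (by simp only [hX (σ0 i) i]; simpa using hA (σ0 i) (σ0 i))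
      rw [h]; simp [hX]
    · rw [if_neg hp]
      have h := iSup_single (fun q => X p i * X q i * A p q) (σ0 i)
        (fun q _ => by simp [hX p i, hp])
        (by simp [hX p i, hp])
      rw [h]; simp [hX p i, hp]
  rw [iSup_congr inner]
  have h := iSup_single (fun p => if p = σ0 i then A (σ0 i) (σ0 i) else 0) (σ0 i)
    (fun p hp => by simp [hp]) (by simpa using hA (σ0 i) (σ0 i))
  rw [h]; simp

private lemma perm_mem {n : ℕ} (hn : 0 < n) (σ : Equiv.Perm (Fin n)) :
    (Matrix.of fun p i => if p = σ i then (1:ℝ) else 0) ∈ Uset n := by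
  haveI : Nonempty (Fin n) := ⟨⟨0, hn⟩⟩
  refine ⟨fun i j => by dsimp; split <;> norm_num, ?_, ?_⟩
  · ext i j
    simp only [maxMul, Matrix.of_apply, Matrix.transpose_apply, Matrix.one_apply]
    by_cases hij : i = j
    · subst hij
      have h := iSup_single
        (fun p => (if p = σ i then (1:ℝ) else 0) * (if p = σ i then (1:ℝ) else 0)) (σ i)
        (fun p hp => by simp [hp]) (by simp)
      rw [h]; simp
    · have hσ : σ i ≠ σ j := fun h => hij (σ.injective h)
      have h := iSup_single
        (fun p => (if p = σ i then (1:ℝ) else 0) * (if p = σ j then (1:ℝ) else 0)) (σ i)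
        (fun p hp => by simp [hp]) (by simp [hσ])
      rw [h]; simp [hσ, hij]
  · ext p q
    simp only [maxMul, Matrix.of_apply, Matrix.transpose_apply, Matrix.one_apply]
    by_cases hpq : p = q
    · subst hpq
      have h := iSup_single
        (fun i => (if p = σ i then (1:ℝ) else 0) * (if p = σ i then (1:ℝ) else 0)) (σ.symm p)
        (fun i hi => by
          have hps : p ≠ σ i := fun h => hi (by rw [h]; simp)
          simp [hps]) (by simp)
      rw [h]; simp
    · have hqp : q ≠ p := fun h => hpq h.symm
      have h := iSup_single
        (fun i => (if p = σ i then (1:ℝ) else 0) * (if q = σ i then (1:ℝ) else 0)) (σ.symm p)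
        (fun i hi => by
          have hps : p ≠ σ i := fun h => hi (by rw [h]; simp)
          simp [hps]) (by simp [hqp])
      rw [h]; simp [hqp, hpq]

private lemma Uset_perm {n : ℕ} (hn : 0 < n) {X : Matrix (Fin n) (Fin n) ℝ}
    (hX : X ∈ Uset n) :
    ∃ σ : Equiv.Perm (Fin n), ∀ p i, X p i = if p = σ i then 1 else 0 := by
  haveI : Nonempty (Fin n) := ⟨⟨0, hn⟩⟩
  obtain ⟨hpos, hcol, hrow⟩ := hX
  have col : ∀ i j, (⨆ p, X p i * X p j) = if i = j then (1:ℝ) else 0 := by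
    intro i j
    have := congrFun (congrFun hcol i) j
    simpa [maxMul, Matrix.one_apply] using this
  have row : ∀ p q, (⨆ i, X p i * X q i) = if p = q then (1:ℝ) else 0 := by
    intro p q
    have := congrFun (congrFun hrow p) q
    simpa [maxMul, Matrix.one_apply] using this
  have exist1 : ∀ i, ∃ p, X p i = 1 := by
    intro i
    obtain ⟨p0, hp0⟩ := Finite.exists_max (fun p => X p i * X p i)
    have hsup : (⨆ p, X p i * X p i) = X p0 i * X p0 i :=
      le_antisymm (ciSup_le hp0) (le_ciSup (bddR (fun p => X p i * X p i)) p0)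
    have h1 : X p0 i * X p0 i = 1 := by rw [← hsup]; simpa using col i i
    rcases mul_self_eq_one_iff.mp h1 with h | h
    · exact ⟨p0, h⟩
    · exfalso; have := hpos p0 i; linarith
  choose σ0 hσ0 using exist1
  have hinj : Function.Injective σ0 := by
    intro i j hij
    by_contra hne
    have hz : (⨆ p, X p i * X p j) = 0 := by rw [col i j, if_neg hne]
    have := iSup_zero _ hz (fun p => mul_nonneg (hpos p i) (hpos p j)) (σ0 i)
    rw [hσ0 i, hij, hσ0 j] at this
    norm_num at this
  refine ⟨Equiv.ofBijective σ0 ((Finite.injective_iff_bijective).mp hinj), ?_⟩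
  intro p i
  show X p i = if p = σ0 i then 1 else 0
  by_cases hp : p = σ0 i
  · rw [if_pos hp, hp, hσ0]
  · rw [if_neg hp]
    have hz : (⨆ j, X p j * X (σ0 i) j) = 0 := by rw [row p (σ0 i), if_neg hp]
    have := iSup_zero _ hz (fun j => mul_nonneg (hpos p j) (hpos (σ0 i) j)) i
    rw [hσ0 i] at this
    linarith

/-- For nonnegative `A ∈ M_n(ℝ₊)` and `c ∈ ℝ₊ⁿ`:
`W_max^c(A) = { max_i c_i a_{σ(i)σ(i)} : σ ∈ S_n }`; in particular, if all `c_i` are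
equal or all diagonal entries of `A` are equal, then `W_max^c(A)` is a singleton. -/
theorem stmt_19 {n : ℕ} (hn : 0 < n) (A : Matrix (Fin n) (Fin n) ℝ)
    (hA : ∀ i j, 0 ≤ A i j) (c : Fin n → ℝ) (hc : ∀ i, 0 ≤ c i) :
    WmaxC c A = {z | ∃ σ : Equiv.Perm (Fin n), z = ⨆ i, c i * A (σ i) (σ i)} ∧
    (((∀ i j, c i = c j) ∨ (∀ i j : Fin n, A i i = A j j)) →
      ∃ z : ℝ, WmaxC c A = {z}) := by
  haveI : Nonempty (Fin n) := ⟨⟨0, hn⟩⟩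
  have hset : WmaxC c A = {z | ∃ σ : Equiv.Perm (Fin n), z = ⨆ i, c i * A (σ i) (σ i)} := by
    ext z
    constructor
    · rintro ⟨X, hX, rfl⟩
      obtain ⟨σ, hσ⟩ := Uset_perm hn hX
      refine ⟨σ, ?_⟩
      exact iSup_congr fun i => by rw [quad_eval hn A hA X σ hσ i]
    · rintro ⟨σ, rfl⟩
      refine ⟨Matrix.of fun p i => if p = σ i then (1:ℝ) else 0, perm_mem hn σ, ?_⟩
      exact (iSup_congr fun i => by
        rw [quad_eval hn A hA (Matrix.of fun p i => if p = σ i then (1:ℝ) else 0) σ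
          (fun p i => rfl) i]).symm
  refine ⟨hset, ?_⟩
  intro h
  refine ⟨⨆ i, c i * A i i, ?_⟩
  rw [hset]
  ext z
  simp only [Set.mem_setOf_eq, Set.mem_singleton_iff]
  constructor
  · rintro ⟨σ, rfl⟩
    rcases h with h | h
    · calc (⨆ i, c i * A (σ i) (σ i)) = ⨆ i, c (σ i) * A (σ i) (σ i) :=
            iSup_congr fun i => by rw [h i (σ i)]
        _ = ⨆ i, c i * A i i := σ.surjective.iSup_comp (fun j => c j * A j j)
    · exact iSup_congr fun i => by rw [h (σ i) i]
  · rintro rfl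
    exact ⟨Equiv.refl _, by simp⟩
end
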